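/- arXiv:2505.00783 — 11 statements merged into one kernel-verified Lean document; each statement's English description precedes it below -/
import Mathlib

section
/- If φ and ψ are both isomorphisms from a game (A, u) to a game (A', u'), then u'(φ(a)) = u'(ψ(a)) for all a ∈ A; that is, all isomorphisms between two given games induce the same mapping of utility vectors. -/
namespace SPIs

/-- `Pareto x y` means `y` is a weak Pareto improvement on `x`, i.e. `y ⪰ x`. -/
def Pareto {n : ℕ} (x y : Fin n → ℝ) : Prop := ∀ i, x i ≤ y i

/-- `StrictPareto x y` means `y` is a strict Pareto improvement on `x`, i.e. `y ≻ x`. -/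
def StrictPareto {n : ℕ} (x y : Fin n → ℝ) : Prop := Pareto x y ∧ ∃ i, x i < y i

/-- `φ = (φ_1, …, φ_n)` is a game isomorphism from the game `(A, u)` to the game `(A', u')`:
each `φ i` is a bijection and the utilities are related entrywise positive-affinely. -/
def IsIso {n : ℕ} {α β : Fin n → Type*} (u : (∀ i, α i) → Fin n → ℝ)
    (u' : (∀ i, β i) → Fin n → ℝ) (φ : ∀ i, α i → β i) : Prop :=
  (∀ i, Function.Bijective (φ i)) ∧
  ∃ m b : Fin n → ℝ, (∀ i, 0 < m i) ∧
    ∀ (a : ∀ i, α i) (i : Fin n), u' (fun j => φ j (a j)) i = m i * u a i + b i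

/-- Auxiliary: an isomorphism maps the max (resp. min) utility of player `i` in `A` to
the max (resp. min) utility of player `i` in `B`. -/
lemma iso_sup_inf {n : ℕ} {α β : Fin n → Type*}
    [∀ i, Fintype (α i)] [∀ i, Nonempty (α i)] [∀ i, Fintype (β i)] [∀ i, Nonempty (β i)]
    (u : (∀ i, α i) → Fin n → ℝ) (u' : (∀ i, β i) → Fin n → ℝ)
    (φ : ∀ i, α i → β i) (i : Fin n) (m b : Fin n → ℝ) (hm : 0 < m i)
    (hbij : ∀ i, Function.Bijective (φ i))
    (h : ∀ (a : ∀ j, α j), u' (fun j => φ j (a j)) i = m i * u a i + b i) :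
    m i * (Finset.univ.sup' Finset.univ_nonempty (fun a => u a i)) + b i
        = Finset.univ.sup' Finset.univ_nonempty (fun x => u' x i) ∧
    m i * (Finset.univ.inf' Finset.univ_nonempty (fun a => u a i)) + b i
        = Finset.univ.inf' Finset.univ_nonempty (fun x => u' x i) := by
  constructor
  · apply le_antisymm
    · obtain ⟨a0, _, ha0⟩ :=
        Finset.exists_mem_eq_sup' (Finset.univ_nonempty (α := ∀ j, α j)) (fun a => u a i)
      rw [ha0, ← h a0]
      exact Finset.le_sup' (fun x => u' x i) (Finset.mem_univ _)
    · apply Finset.sup'_le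
      intro x _
      set a : ∀ j, α j := fun j => Function.surjInv (hbij j).2 (x j) with ha
      have hx : x = fun j => φ j (a j) := by
        funext j
        exact (Function.surjInv_eq (hbij j).2 (x j)).symm
      rw [hx, h a]
      have : u a i ≤ Finset.univ.sup' Finset.univ_nonempty (fun y => u y i) :=
        Finset.le_sup' (fun y => u y i) (Finset.mem_univ a)
      nlinarith
  · apply le_antisymm
    · apply Finset.le_inf'
      intro x _
      set a : ∀ j, α j := fun j => Function.surjInv (hbij j).2 (x j) with ha
      have hx : x = fun j => φ j (a j) := by
        funext j
        exact (Function.surjInv_eq (hbij j).2 (x j)).symm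
      rw [hx, h a]
      have : Finset.univ.inf' Finset.univ_nonempty (fun y => u y i) ≤ u a i :=
        Finset.inf'_le (fun y => u y i) (Finset.mem_univ a)
      nlinarith
    · obtain ⟨a0, _, ha0⟩ :=
        Finset.exists_mem_eq_inf' (Finset.univ_nonempty (α := ∀ j, α j)) (fun a => u a i)
      rw [ha0, ← h a0]
      exact Finset.inf'_le (fun x => u' x i) (Finset.mem_univ _)

/-- all isomorphisms between two given games induce the same mapping of
utility vectors. -/
theorem isos_agree_on_utilities {n : ℕ} {α β : Fin n → Type*}
    [∀ i, Fintype (α i)] [∀ i, Nonempty (α i)] [∀ i, Fintype (β i)] [∀ i, Nonempty (β i)]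
    (u : (∀ i, α i) → Fin n → ℝ) (u' : (∀ i, β i) → Fin n → ℝ)
    (φ ψ : ∀ i, α i → β i) (hφ : IsIso u u' φ) (hψ : IsIso u u' ψ) :
    ∀ (a : ∀ i, α i) (i : Fin n),
      u' (fun j => φ j (a j)) i = u' (fun j => ψ j (a j)) i := by
  intro a i
  obtain ⟨hφb, m₁, b₁, hm₁, h₁⟩ := hφ
  obtain ⟨hψb, m₂, b₂, hm₂, h₂⟩ := hψ
  obtain ⟨e₁, e₁'⟩ := iso_sup_inf u u' φ i m₁ b₁ (hm₁ i) hφb (fun a => h₁ a i)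
  obtain ⟨e₂, e₂'⟩ := iso_sup_inf u u' ψ i m₂ b₂ (hm₂ i) hψb (fun a => h₂ a i)
  rw [h₁, h₂]
  set M := Finset.univ.sup' Finset.univ_nonempty (fun a => u a i) with hM
  set μ := Finset.univ.inf' Finset.univ_nonempty (fun a => u a i) with hμ
  have hE : m₁ i * M + b₁ i = m₂ i * M + b₂ i := by rw [e₁, e₂]
  have hE' : m₁ i * μ + b₁ i = m₂ i * μ + b₂ i := by rw [e₁', e₂']
  have hxM : u a i ≤ M := Finset.le_sup' (fun a => u a i) (Finset.mem_univ a)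
  have hxμ : μ ≤ u a i := Finset.inf'_le (fun a => u a i) (Finset.mem_univ a)
  have hmul : (m₁ i - m₂ i) * (M - μ) = 0 := by nlinarith
  rcases mul_eq_zero.1 hmul with h | h
  · have hm : m₁ i = m₂ i := by linarith
    have hb : b₁ i = b₂ i := by
      have := hE
      rw [hm] at this
      linarith
    rw [hm, hb]
  · have hMμ : M = μ := by linarith
    have hx : u a i = M := le_antisymm hxM (by linarith)
    rw [hx]
    exact hE

end SPIs
end

section
/- Let G = (A, u) and G' = (A', u') be games and suppose some isomorphism from G to G' is Pareto improving (respectively, strictly Pareto improving). Then every isomorphism from G to G' is Pareto improving (respectively, strictly Pareto improving). -/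
namespace SPIs

/-- The isomorphism `φ` is (weakly) Pareto improving. -/
def IsoParetoImproving {n : ℕ} {α β : Fin n → Type*} (u : (∀ i, α i) → Fin n → ℝ)
    (u' : (∀ i, β i) → Fin n → ℝ) (φ : ∀ i, α i → β i) : Prop :=
  ∀ a : ∀ i, α i, Pareto (u a) (u' (fun j => φ j (a j)))

/-- The isomorphism `φ` is strictly Pareto improving. -/
def IsoStrictParetoImproving {n : ℕ} {α β : Fin n → Type*} (u : (∀ i, α i) → Fin n → ℝ)
    (u' : (∀ i, β i) → Fin n → ℝ) (φ : ∀ i, α i → β i) : Prop :=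
  IsoParetoImproving u u' φ ∧ ∃ a : ∀ i, α i, StrictPareto (u a) (u' (fun j => φ j (a j)))

/-- If an increasing affine map carries the (finite) image of `F` onto itself (as a finset),
then `G = c F + d` coincides with `F`. -/
lemma affine_image_fix {ι : Type*} [Fintype ι] [Nonempty ι] (F G : ι → ℝ) (c d : ℝ)
    (hc : 0 < c) (hG : ∀ x, G x = c * F x + d)
    (himg : Finset.univ.image F = Finset.univ.image G) :
    ∀ x, G x = F x := by
  have hne : (Finset.univ.image F).Nonempty :=
    ⟨F (Classical.arbitrary ι), Finset.mem_image_of_mem _ (Finset.mem_univ _)⟩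
  set M := (Finset.univ.image F).max' hne with hM
  set mm := (Finset.univ.image F).min' hne with hmm
  obtain ⟨xM, -, hxM⟩ := Finset.mem_image.1 ((Finset.univ.image F).max'_mem hne)
  obtain ⟨xm, -, hxm⟩ := Finset.mem_image.1 ((Finset.univ.image F).min'_mem hne)
  have hFle : ∀ x, F x ≤ M := fun x =>
    Finset.le_max' _ _ (Finset.mem_image_of_mem _ (Finset.mem_univ _))
  have hFge : ∀ x, mm ≤ F x := fun x =>
    Finset.min'_le _ _ (Finset.mem_image_of_mem _ (Finset.mem_univ _))
  have hGle : ∀ x, G x ≤ c * M + d := fun x => by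
    rw [hG x]; have := hFle x; nlinarith
  have hGge : ∀ x, c * mm + d ≤ G x := fun x => by
    rw [hG x]; have := hFge x; nlinarith
  have hGmax : c * M + d = M := by
    have h2 : c * M + d ∈ Finset.univ.image G :=
      Finset.mem_image.2 ⟨xM, Finset.mem_univ _, by rw [hG xM, hxM]⟩
    have h3 : c * M + d ≤ M := by
      have h2' : c * M + d ∈ Finset.univ.image F := himg ▸ h2
      obtain ⟨y, -, hy⟩ := Finset.mem_image.1 h2'
      rw [← hy]; exact hFle y
    have h4 : M ≤ c * M + d := by
      have hMG : M ∈ Finset.univ.image G := himg ▸ (Finset.max'_mem _ hne)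
      obtain ⟨y, -, hy⟩ := Finset.mem_image.1 hMG
      have := hGle y; linarith
    linarith
  have hGmin : c * mm + d = mm := by
    have h2 : c * mm + d ∈ Finset.univ.image G :=
      Finset.mem_image.2 ⟨xm, Finset.mem_univ _, by rw [hG xm, hxm]⟩
    have h3 : mm ≤ c * mm + d := by
      have h2' : c * mm + d ∈ Finset.univ.image F := himg ▸ h2
      obtain ⟨y, -, hy⟩ := Finset.mem_image.1 h2'
      rw [← hy]; exact hFge y
    have h4 : c * mm + d ≤ mm := by
      have hmG : mm ∈ Finset.univ.image G := himg ▸ (Finset.min'_mem _ hne)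
      obtain ⟨y, -, hy⟩ := Finset.mem_image.1 hmG
      have := hGge y; linarith
    linarith
  intro x
  have hcase : (c - 1) * (M - mm) = 0 := by nlinarith
  rcases mul_eq_zero.1 hcase with h | h
  · have hc1 : c = 1 := by linarith
    have hd0 : d = 0 := by rw [hc1] at hGmax; linarith
    rw [hG x, hc1, hd0]; ring
  · have hMm : M = mm := by linarith
    have hxe : F x = M := le_antisymm (hFle x) (hMm ▸ hFge x)
    rw [hG x, hxe, hGmax]

lemma image_comp_equiv {ι ι' : Type*} [Fintype ι] [Fintype ι'] [DecidableEq ℝ]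
    (e : ι ≃ ι') (f : ι' → ℝ) :
    Finset.univ.image (fun x => f (e x)) = Finset.univ.image f := by
  ext y
  simp only [Finset.mem_image, Finset.mem_univ, true_and]
  constructor
  · rintro ⟨x, rfl⟩; exact ⟨e x, rfl⟩
  · rintro ⟨x, rfl⟩; exact ⟨e.symm x, by simp⟩

/-- if some isomorphism from `G` to `G'` is (strictly) Pareto improving,
then every isomorphism from `G` to `G'` is (strictly) Pareto improving. -/
theorem pareto_improving_iso_all {n : ℕ} {α β : Fin n → Type*}
    [∀ i, Fintype (α i)] [∀ i, Nonempty (α i)] [∀ i, Fintype (β i)] [∀ i, Nonempty (β i)]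
    (u : (∀ i, α i) → Fin n → ℝ) (u' : (∀ i, β i) → Fin n → ℝ)
    (φ ψ : ∀ i, α i → β i) (hφ : IsIso u u' φ) (hψ : IsIso u u' ψ) :
    (IsoParetoImproving u u' φ → IsoParetoImproving u u' ψ) ∧
    (IsoStrictParetoImproving u u' φ → IsoStrictParetoImproving u u' ψ) := by
  classical
  obtain ⟨hφb, m, b, hm, hu⟩ := hφ
  obtain ⟨hψb, m', b', hm', hu'⟩ := hψ
  have hEq : ∀ (a : ∀ i, α i) (i : Fin n),
      u' (fun j => ψ j (a j)) i = u' (fun j => φ j (a j)) i := by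
    intro a i
    let Φ : (∀ i, α i) ≃ (∀ i, β i) :=
      Equiv.piCongrRight (fun i => Equiv.ofBijective _ (hφb i))
    let Ψ : (∀ i, α i) ≃ (∀ i, β i) :=
      Equiv.piCongrRight (fun i => Equiv.ofBijective _ (hψb i))
    have hΦ : ∀ x : ∀ i, α i, (fun j => φ j (x j)) = Φ x := fun x => rfl
    have hΨ : ∀ x : ∀ i, α i, (fun j => ψ j (x j)) = Ψ x := fun x => rfl
    have himg : Finset.univ.image (fun x : ∀ i, α i => u' (fun j => φ j (x j)) i)
        = Finset.univ.image (fun x : ∀ i, α i => u' (fun j => ψ j (x j)) i) := by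
      have e1 : Finset.univ.image (fun x : ∀ i, α i => u' (fun j => φ j (x j)) i)
          = Finset.univ.image (fun a' => u' a' i) := by
        simp only [hΦ]; exact image_comp_equiv Φ (fun a' => u' a' i)
      have e2 : Finset.univ.image (fun x : ∀ i, α i => u' (fun j => ψ j (x j)) i)
          = Finset.univ.image (fun a' => u' a' i) := by
        simp only [hΨ]; exact image_comp_equiv Ψ (fun a' => u' a' i)
      rw [e1, e2]
    have hGaff : ∀ x : ∀ i, α i, u' (fun j => ψ j (x j)) i
        = (m' i / m i) * u' (fun j => φ j (x j)) i + (b' i - m' i / m i * b i) := by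
      intro x
      have h1 := hu x i
      have h2 := hu' x i
      have hmi : m i ≠ 0 := (hm i).ne'
      rw [h1, h2]
      field_simp
      ring
    exact affine_image_fix _ _ _ _ (div_pos (hm' i) (hm i)) hGaff himg a
  constructor
  · intro hP a i
    have := hP a i
    rw [hEq a i]
    exact this
  · rintro ⟨hP, a, hPa, i, hi⟩
    refine ⟨fun a' i' => by rw [hEq a' i']; exact hP a' i', a, ?_, i, ?_⟩
    · intro j; rw [hEq a j]; exact hPa j
    · rw [hEq a i]; exact hi
end SPIs
end

section
/- A game G = (A, u) admits a simple token SPI realizable in A (pure token game) if and only if there exists an outcome a' ∈ A such that u(a') ⪰ u(a) for every a ∈ Ā and u(a') ≻ u(a) for at least one a ∈ Ā. -/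
namespace SPIs

/-- An `n`-player normal-form game whose (finite, nonempty) action sets are drawn from the
fixed countably infinite universe `ℕ`. -/
structure Game (n : ℕ) where
  act : Fin n → Finset ℕ
  act_nonempty : ∀ i, (act i).Nonempty
  u : (Fin n → ℕ) → Fin n → ℝ

namespace Game

variable {n : ℕ}

/-- `a` is an outcome (action profile) of `G`. -/
def mem (G : Game n) (a : Fin n → ℕ) : Prop := ∀ i, a i ∈ G.act i

/-- Action `x` of Player `i` is strictly dominated (by some action `x'`) in `G`. -/
def Dominated (G : Game n) (i : Fin n) (x : ℕ) : Prop :=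
  x ∈ G.act i ∧ ∃ x' ∈ G.act i, ∀ a : Fin n → ℕ, G.mem a →
    G.u (Function.update a i x) i < G.u (Function.update a i x') i

/-- `G` contains no strictly dominated actions. -/
def FullyReduced (G : Game n) : Prop := ∀ i x, ¬ G.Dominated i x

/-- `G'` is obtained from `G` by removing a single strictly dominated action. -/
def RemoveStep (G G' : Game n) : Prop :=
  ∃ i x, G.Dominated i x ∧
    G'.act = Function.update G.act i ((G.act i).erase x) ∧ G'.u = G.u

/-- `H` is the reduced game `Ḡ` of `G`: it is obtained from `G` by iteratively removing
strictly dominated actions and itself has none left. -/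
def IsReduction (G H : Game n) : Prop :=
  Relation.ReflTransGen RemoveStep G H ∧ H.FullyReduced

/-- `φ` is a game isomorphism from `G` to `G'`. -/
def Iso (G G' : Game n) (φ : Fin n → ℕ → ℕ) : Prop :=
  (∀ i, Set.BijOn (φ i) (G.act i : Set ℕ) (G'.act i : Set ℕ)) ∧
  ∃ m b : Fin n → ℝ, (∀ i, 0 < m i) ∧
    ∀ a : Fin n → ℕ, G.mem a → ∀ i, G'.u (fun j => φ j (a j)) i = m i * G.u a i + b i

/-- The finite set of all action profiles of `G`. -/
def outcomes (G : Game n) : Finset (Fin n → ℕ) := Fintype.piFinset G.act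

end Game


lemma act_subset_of_steps {n : ℕ} {G H : Game n}
    (h : Relation.ReflTransGen Game.RemoveStep G H) :
    ∀ i, H.act i ⊆ G.act i := by
  induction h with
  | refl => intro i; exact fun x hx => hx
  | tail hab hbc ih =>
    intro i x hx
    obtain ⟨j, y, _, hact, _⟩ := hbc
    apply ih i
    rw [hact] at hx
    by_cases hij : i = j
    · subst hij
      rw [Function.update_self] at hx
      exact Finset.mem_of_mem_erase hx
    · rwa [Function.update_of_ne hij] at hx

/-- `G` admits a simple token SPI realizable in `A` (a pure token game)
iff some outcome `a' ∈ A` weakly Pareto dominates every outcome of the reduced game `Ḡ`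
and strictly Pareto dominates at least one outcome of `Ḡ`. -/
theorem simple_pure_token_spi_iff {n : ℕ} (G Gb : Game n)
    (hred : Game.IsReduction G Gb) :
    (∃ T Tb : Game n, ∃ Ψ : (Fin n → ℕ) → (Fin n → ℕ),
        (∀ t, T.mem t → G.mem (Ψ t) ∧ ∀ i, T.u t i = G.u (Ψ t) i) ∧
        Game.IsReduction T Tb ∧
        (∀ t, Tb.mem t → ∀ a, Gb.mem a → Pareto (G.u a) (T.u t)) ∧
        (∃ a, Gb.mem a ∧ ∀ t, Tb.mem t → StrictPareto (G.u a) (T.u t))) ↔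
      (∃ a', G.mem a' ∧ (∀ a, Gb.mem a → Pareto (G.u a) (G.u a')) ∧
        (∃ a, Gb.mem a ∧ StrictPareto (G.u a) (G.u a'))) := by
  constructor
  · rintro ⟨T, Tb, Ψ, hΨ, ⟨hsteps, _⟩, hpar, a, ha, hstrict⟩
    -- pick an outcome of Tb
    set t : Fin n → ℕ := fun i => (Tb.act_nonempty i).choose with ht
    have htmemb : Tb.mem t := fun i => (Tb.act_nonempty i).choose_spec
    have htmem : T.mem t := fun i => act_subset_of_steps hsteps i (htmemb i)
    obtain ⟨hGmem, hueq⟩ := hΨ t htmem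
    refine ⟨Ψ t, hGmem, ?_, a, ha, ?_⟩
    · intro b hb i
      have := hpar t htmemb b hb i
      rwa [hueq i] at this
    · obtain ⟨h1, i, h2⟩ := hstrict t htmemb
      refine ⟨fun j => ?_, i, ?_⟩
      · have := h1 j; rwa [hueq j] at this
      · rwa [hueq i] at h2
  · rintro ⟨a', hmem, hpar, a, ha, hstrict⟩
    refine ⟨⟨fun _ => {0}, fun _ => ⟨0, by simp⟩, fun _ => G.u a'⟩,
      ⟨fun _ => {0}, fun _ => ⟨0, by simp⟩, fun _ => G.u a'⟩,
      fun _ => a', fun t _ => ⟨hmem, fun i => rfl⟩,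
      ⟨Relation.ReflTransGen.refl, ?_⟩,
      fun t _ b hb => hpar b hb, a, ha, fun t _ => hstrict⟩
    rintro i x ⟨hx, x', hx', hlt⟩
    have := hlt (fun _ => 0) (fun j => by simp)
    exact lt_irrefl _ this

end SPIs
end

section
/- Let G = (A, u) be a game, let F ⊆ Δ(A) be nonempty, and let 𝒯 = (T, u^T) be a token game on G realizable in F that is an isomorphism token SPI on G. Then there exists a valid utility remapping function ψ : u(Ā) → u(F) such that for every a ∈ Ā and every isomorphism φ from Ḡ to the reduced token game 𝒯̄, u^T(φ(a)) = ψ(u(a)). -/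
namespace SPIs

/-- `p` is a correlated strategy profile (probability distribution over outcomes) of `G`. -/
def IsDistOn {n : ℕ} (G : Game n) (p : (Fin n → ℕ) → ℝ) : Prop :=
  (∀ a, 0 ≤ p a) ∧ (∀ a : Fin n → ℕ, ¬ G.mem a → p a = 0) ∧
    (∑ a ∈ G.outcomes, p a) = 1

/-- The expected utility vector of a correlated strategy profile `p` in `G`. -/
def expU {n : ℕ} (G : Game n) (p : (Fin n → ℕ) → ℝ) : Fin n → ℝ :=
  fun i => ∑ a ∈ G.outcomes, p a * G.u a i

/-- The point-mass distribution on the outcome `a`. -/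
def pointMass {n : ℕ} (a : Fin n → ℕ) : (Fin n → ℕ) → ℝ :=
  fun b => if b = a then 1 else 0

/-- A valid utility remapping function from the set `V` of payoff vectors into the set `R`
of payoff vectors: it maps `V` into `R`, is weakly Pareto improving on `V`, strictly Pareto
improving somewhere on `V`, and entrywise positive affine on `V`. -/
def ValidRemap {n : ℕ} (V R : Set (Fin n → ℝ)) (ψ : (Fin n → ℝ) → Fin n → ℝ) : Prop :=
  (∀ v ∈ V, ψ v ∈ R) ∧ (∀ v ∈ V, Pareto v (ψ v)) ∧ (∃ v ∈ V, StrictPareto v (ψ v)) ∧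
  (∀ i, ∃ m b : ℝ, 0 < m ∧ ∀ v ∈ V, ψ v i = m * v i + b)

/-- The token game `T` is realized in the feasible set `F` of correlated strategy profiles of
`G` via the realization function `Ψ`: every token outcome's payoff vector is the payoff vector
of the corresponding feasible strategy profile. -/
def Realizes {n : ℕ} (G : Game n) (F : Set ((Fin n → ℕ) → ℝ)) (T : Game n)
    (Ψ : (Fin n → ℕ) → ((Fin n → ℕ) → ℝ)) : Prop :=
  ∀ t, T.mem t → Ψ t ∈ F ∧ ∀ i, T.u t i = expU G (Ψ t) i

/-- The token game `T`, with reduced token game `Tb`, is an isomorphism token SPI on `G` (with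
reduced game `Gb`): there is a strictly Pareto improving isomorphism from `Gb` to `Tb`. -/
def IsoTokenSPI {n : ℕ} (G Gb T Tb : Game n) : Prop :=
  ∃ φ, Gb.Iso Tb φ ∧ (∀ a, Gb.mem a → Pareto (G.u a) (T.u (fun j => φ j (a j)))) ∧
    (∃ a, Gb.mem a ∧ StrictPareto (G.u a) (T.u (fun j => φ j (a j))))

lemma u_eq_of_steps {n : ℕ} {G H : Game n}
    (h : Relation.ReflTransGen Game.RemoveStep G H) : H.u = G.u := by
  induction h with
  | refl => rfl
  | tail _ hstep ih => obtain ⟨i, x, _, _, hu⟩ := hstep; rw [hu, ih]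

lemma mem_of_steps {n : ℕ} {G H : Game n}
    (h : Relation.ReflTransGen Game.RemoveStep G H) {a : Fin n → ℕ}
    (ha : H.mem a) : G.mem a :=
  fun i => act_subset_of_steps h i (ha i)

lemma affine_fix (S : Finset ℝ) {c d : ℝ} (hc : 0 < c)
    (hmaps : ∀ x ∈ S, c * x + d ∈ S)
    (hsurj : ∀ y ∈ S, ∃ x ∈ S, c * x + d = y) :
    ∀ x ∈ S, c * x + d = x := by
  intro x hx
  have hne : S.Nonempty := ⟨x, hx⟩
  set M := S.max' hne with hM
  set mm := S.min' hne with hmm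
  have hMS := S.max'_mem hne
  have hmS := S.min'_mem hne
  have hfM : c * M + d = M := by
    obtain ⟨y, hyS, hy⟩ := hsurj M hMS
    have h1 : c * M + d ≤ M := S.le_max' _ (hmaps M hMS)
    have h2 : y ≤ M := S.le_max' _ hyS
    nlinarith
  have hfm : c * mm + d = mm := by
    obtain ⟨y, hyS, hy⟩ := hsurj mm hmS
    have h1 : mm ≤ c * mm + d := S.min'_le _ (hmaps mm hmS)
    have h2 : mm ≤ y := S.min'_le _ hyS
    nlinarith
  have hx1 : mm ≤ x := S.min'_le _ hx
  have hx2 : x ≤ M := S.le_max' _ hx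
  rcases le_total 1 c with h | h
  · have h1 : 0 ≤ (c - 1) * (x - mm) := mul_nonneg (by linarith) (by linarith)
    have h2 : (c - 1) * (x - M) ≤ 0 :=
      mul_nonpos_of_nonneg_of_nonpos (by linarith) (by linarith)
    nlinarith
  · have h1 : (c - 1) * (x - mm) ≤ 0 :=
      mul_nonpos_of_nonpos_of_nonneg (by linarith) (by linarith)
    have h2 : 0 ≤ (c - 1) * (x - M) := by nlinarith
    nlinarith

/-- first half of Lemma 2 of the paper: an isomorphism token SPI on `G`
realizable in `F` yields a valid utility remapping function `ψ : u(Ā) → u(F)` that describes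
the effect on payoffs of every isomorphism from `Ḡ` to the reduced token game. -/
theorem iso_token_spi_gives_valid_remap {n : ℕ} (G Gb : Game n)
    (hred : Game.IsReduction G Gb)
    (F : Set ((Fin n → ℕ) → ℝ)) (hF : ∀ p ∈ F, IsDistOn G p) (hFne : F.Nonempty)
    (T Tb : Game n) (Ψ : (Fin n → ℕ) → ((Fin n → ℕ) → ℝ))
    (hreal : Realizes G F T Ψ) (hTred : Game.IsReduction T Tb)
    (hSPI : IsoTokenSPI G Gb T Tb) :
    ∃ ψ : (Fin n → ℝ) → Fin n → ℝ,
      ValidRemap (G.u '' {a | Gb.mem a}) (expU G '' F) ψ ∧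
      ∀ a, Gb.mem a → ∀ φ, Gb.Iso Tb φ →
        T.u (fun j => φ j (a j)) = ψ (G.u a) := by
  obtain ⟨φ₀, ⟨hbij₀, m, b, hm, haff₀⟩, hPar, a₀, ha₀, hstrict⟩ := hSPI
  have hGu : Gb.u = G.u := u_eq_of_steps hred.1
  have hTu : Tb.u = T.u := u_eq_of_steps hTred.1
  have hTmem : ∀ t, Tb.mem t → T.mem t := fun t ht => mem_of_steps hTred.1 ht
  -- the affine relation for φ₀, in terms of G.u and T.u
  have key : ∀ a, Gb.mem a → ∀ i,
      T.u (fun j => φ₀ j (a j)) i = m i * G.u a i + b i := by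
    intro a ha i
    have := haff₀ a ha i
    rwa [hGu, hTu] at this
  -- membership of images under isos
  have hmemOf : ∀ (χ : Fin n → ℕ → ℕ),
      (∀ j, Set.BijOn (χ j) (Gb.act j : Set ℕ) (Tb.act j : Set ℕ)) →
      ∀ a, Gb.mem a → Tb.mem (fun j => χ j (a j)) := by
    intro χ hbij a ha j
    exact_mod_cast (hbij j).mapsTo (by exact_mod_cast ha j)
  have hsurjOf : ∀ (χ : Fin n → ℕ → ℕ),
      (∀ j, Set.BijOn (χ j) (Gb.act j : Set ℕ) (Tb.act j : Set ℕ)) →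
      ∀ t, Tb.mem t → ∃ a, Gb.mem a ∧ ∀ j, χ j (a j) = t j := by
    intro χ hbij t ht
    have h : ∀ j, ∃ x ∈ (Gb.act j : Set ℕ), χ j x = t j := by
      intro j
      exact (hbij j).surjOn (by exact_mod_cast ht j)
    choose f hf1 hf2 using h
    exact ⟨f, fun j => by exact_mod_cast hf1 j, hf2⟩
  refine ⟨fun v i => m i * v i + b i, ?_, ?_⟩
  · -- ValidRemap
    have himg : ∀ a, Gb.mem a →
        (fun i => m i * G.u a i + b i) = T.u (fun j => φ₀ j (a j)) :=
      fun a ha => funext fun i => (key a ha i).symm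
    refine ⟨?_, ?_, ?_, ?_⟩
    · rintro v ⟨a, ha, rfl⟩
      have hTm : T.mem (fun j => φ₀ j (a j)) := hTmem _ (hmemOf φ₀ hbij₀ a ha)
      obtain ⟨hΨF, hΨu⟩ := hreal _ hTm
      refine ⟨Ψ (fun j => φ₀ j (a j)), hΨF, ?_⟩
      rw [← funext hΨu, ← himg a ha]
    · rintro v ⟨a, ha, rfl⟩
      show Pareto (G.u a) (fun i => m i * G.u a i + b i)
      rw [himg a ha]
      exact hPar a ha
    · refine ⟨G.u a₀, ⟨a₀, ha₀, rfl⟩, ?_⟩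
      show StrictPareto (G.u a₀) (fun i => m i * G.u a₀ i + b i)
      rw [himg a₀ ha₀]
      exact hstrict
    · exact fun i => ⟨m i, b i, hm i, fun v _ => rfl⟩
  · -- every iso induces the same payoff map
    intro a ha φ ⟨hbij, m', b', hm', haff⟩
    have key' : ∀ a, Gb.mem a → ∀ i,
        T.u (fun j => φ j (a j)) i = m' i * G.u a i + b' i := by
      intro a ha i
      have := haff a ha i
      rwa [hGu, hTu] at this
    funext i
    set S : Finset ℝ := Gb.outcomes.image (fun a => T.u (fun j => φ₀ j (a j)) i)
      with hS
    have hmemS : ∀ a', Gb.mem a' → T.u (fun j => φ₀ j (a' j)) i ∈ S := by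
      intro a' ha'
      exact Finset.mem_image_of_mem _ (Fintype.mem_piFinset.2 ha')
    have hS_elim : ∀ x ∈ S, ∃ a', Gb.mem a' ∧ T.u (fun j => φ₀ j (a' j)) i = x := by
      intro x hx
      obtain ⟨a', ha', hx⟩ := Finset.mem_image.1 hx
      exact ⟨a', Fintype.mem_piFinset.1 ha', hx⟩
    set c : ℝ := m' i / m i with hc
    set d : ℝ := b' i - c * b i with hd
    have hcpos : 0 < c := div_pos (hm' i) (hm i)
    have hrel : ∀ a', Gb.mem a' →
        c * T.u (fun j => φ₀ j (a' j)) i + d = T.u (fun j => φ j (a' j)) i := by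
      intro a' ha'
      rw [key a' ha' i, key' a' ha' i, hd, hc]
      field_simp [(hm i).ne']
      ring
    -- for any a', T.u (φ a') i lies in S (using surjectivity of φ₀)
    have hφinS : ∀ a', Gb.mem a' → T.u (fun j => φ j (a' j)) i ∈ S := by
      intro a' ha'
      obtain ⟨a'', ha'', heq⟩ :=
        hsurjOf φ₀ hbij₀ (fun j => φ j (a' j)) (hmemOf φ hbij a' ha')
      have : (fun j => φ₀ j (a'' j)) = (fun j => φ j (a' j)) := funext heq
      rw [← this]
      exact hmemS a'' ha''
    have hmaps : ∀ x ∈ S, c * x + d ∈ S := by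
      intro x hx
      obtain ⟨a', ha', rfl⟩ := hS_elim x hx
      rw [hrel a' ha']
      exact hφinS a' ha'
    have hsurjS : ∀ y ∈ S, ∃ x ∈ S, c * x + d = y := by
      intro y hy
      obtain ⟨a', ha', rfl⟩ := hS_elim y hy
      obtain ⟨a'', ha'', heq⟩ :=
        hsurjOf φ hbij (fun j => φ₀ j (a' j)) (hmemOf φ₀ hbij₀ a' ha')
      refine ⟨T.u (fun j => φ₀ j (a'' j)) i, hmemS a'' ha'', ?_⟩
      rw [hrel a'' ha'']
      congr 1
      exact funext heq
    have hfix := affine_fix S hcpos hmaps hsurjS _ (hmemS a ha)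
    rw [← hrel a ha, hfix, key a ha i]

end SPIs
end

section
/- Let G = (A, u) be a game, let F ⊆ Δ(A) be nonempty, and let ψ : u(Ā) → u(F) be a valid utility remapping function. Then there exists a token game 𝒯 = (T, u^T) on G realizable in F that is an isomorphism token SPI on G and satisfies u^T(φ(a)) = ψ(u(a)) for all a ∈ Ā and all isomorphisms φ from Ḡ to the reduced token game 𝒯̄. In particular, an isomorphism token SPI on G realizable in F exists if and only if a valid utility remapping function into u(F) exists. -/
namespace SPIs

/-- A strictly monotone self-surjection of a finite set of reals is the identity on it. -/
lemma strictMono_fix (f : ℝ → ℝ) (hf : StrictMono f) :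
    ∀ (U : Finset ℝ), (∀ x ∈ U, f x ∈ U) → (∀ y ∈ U, ∃ x ∈ U, f x = y) →
    ∀ x ∈ U, f x = x := by
  intro U
  induction U using Finset.strongInduction with
  | _ U ih =>
    intro hmap hsurj x hx
    have hUne : U.Nonempty := ⟨x, hx⟩
    set M := U.max' hUne with hM
    have hMU : M ∈ U := U.max'_mem hUne
    have hfM : f M = M := by
      obtain ⟨y, hy, hfy⟩ := hsurj M hMU
      have h1 : f M ≤ M := U.le_max' _ (hmap M hMU)
      have h2 : y ≤ M := U.le_max' _ hy
      have h3 : f y ≤ f M := hf.le_iff_le.mpr h2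
      rw [hfy] at h3
      linarith
    by_cases hxM : x = M
    · rw [hxM, hfM]
    · refine ih (U.erase M) (Finset.erase_ssubset hMU) ?_ ?_ x
        (Finset.mem_erase.mpr ⟨hxM, hx⟩)
      · intro z hz
        have hz' := Finset.mem_of_mem_erase hz
        refine Finset.mem_erase.mpr ⟨?_, hmap z hz'⟩
        intro h
        exact (Finset.ne_of_mem_erase hz) (hf.injective (h.trans hfM.symm))
      · intro y hy
        have hy' := Finset.mem_of_mem_erase hy
        obtain ⟨z, hz, hfz⟩ := hsurj y hy'
        refine ⟨z, Finset.mem_erase.mpr ⟨?_, hz⟩, hfz⟩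
        rintro rfl
        exact (Finset.ne_of_mem_erase hy) ((hfM ▸ hfz).symm)

/-- Iterated removal of dominated actions preserves the utility function and
shrinks the set of action profiles. -/
lemma reflTrans_u_sub {n : ℕ} {G H : Game n} (h : Relation.ReflTransGen Game.RemoveStep G H) :
    H.u = G.u ∧ ∀ a, H.mem a → G.mem a := by
  induction h with
  | refl => exact ⟨rfl, fun a ha => ha⟩
  | tail _ hstep ih =>
    obtain ⟨i, x, _, hact, hu⟩ := hstep
    refine ⟨hu.trans ih.1, fun a ha => ih.2 a ?_⟩
    intro j
    have hj := ha j
    rw [hact] at hj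
    rcases eq_or_ne j i with rfl | hji
    · rw [Function.update_self] at hj
      exact Finset.mem_of_mem_erase hj
    · rwa [Function.update_of_ne hji] at hj

/-- second half of Lemma 2 of the paper: a valid utility remapping function
`ψ : u(Ā) → u(F)` yields an isomorphism token SPI on `G` realizable in `F` whose effect on
payoffs (under every isomorphism from `Ḡ` to the reduced token game) is described by `ψ`.
In particular, an isomorphism token SPI on `G` realizable in `F` exists iff a valid utility
remapping function into `u(F)` exists. -/
theorem valid_remap_gives_iso_token_spi {n : ℕ} (G Gb : Game n)
    (hred : Game.IsReduction G Gb)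
    (F : Set ((Fin n → ℕ) → ℝ)) (hF : ∀ p ∈ F, IsDistOn G p) (hFne : F.Nonempty)
    (ψ : (Fin n → ℝ) → Fin n → ℝ)
    (hψ : ValidRemap (G.u '' {a | Gb.mem a}) (expU G '' F) ψ) :
    (∃ T Tb : Game n, ∃ Ψ : (Fin n → ℕ) → ((Fin n → ℕ) → ℝ),
        Realizes G F T Ψ ∧ Game.IsReduction T Tb ∧ IsoTokenSPI G Gb T Tb ∧
        ∀ a, Gb.mem a → ∀ φ, Gb.Iso Tb φ → T.u (fun j => φ j (a j)) = ψ (G.u a)) ∧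
    ((∃ T Tb : Game n, ∃ Ψ : (Fin n → ℕ) → ((Fin n → ℕ) → ℝ),
        Realizes G F T Ψ ∧ Game.IsReduction T Tb ∧ IsoTokenSPI G Gb T Tb) ↔
      ∃ ψ' : (Fin n → ℝ) → Fin n → ℝ,
        ValidRemap (G.u '' {a | Gb.mem a}) (expU G '' F) ψ') := by
  have hψ' := hψ
  obtain ⟨hredG, hGbfull⟩ := hred
  obtain ⟨hu_eq, hmem_sub⟩ := reflTrans_u_sub hredG
  obtain ⟨hmapR, hpar, hstrict, haffn⟩ := hψ
  choose m b hm hmb using haffn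
  have hV : ∀ a, Gb.mem a → G.u a ∈ G.u '' {a | Gb.mem a} := fun a ha => ⟨a, ha, rfl⟩
  have memUpd : ∀ (a : Fin n → ℕ) (i : Fin n) (x : ℕ), Gb.mem a → x ∈ Gb.act i →
      Gb.mem (Function.update a i x) := by
    intro a i x ha hx j
    rcases eq_or_ne j i with rfl | h
    · simpa using hx
    · rw [Function.update_of_ne h]; exact ha j
  set T : Game n := ⟨Gb.act, Gb.act_nonempty, fun t => ψ (G.u t)⟩ with hT
  have hTu : ∀ t, T.u t = ψ (G.u t) := fun t => rfl
  have hTmem : ∀ t, T.mem t ↔ Gb.mem t := fun t => Iff.rfl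
  -- the realization function
  have hΨex : ∀ t : Fin n → ℕ, ∃ p, p ∈ F ∧ (Gb.mem t → expU G p = ψ (G.u t)) := by
    intro t
    by_cases ht : Gb.mem t
    · obtain ⟨p, hpF, hpe⟩ := hmapR _ (hV t ht)
      exact ⟨p, hpF, fun _ => hpe⟩
    · obtain ⟨p, hp⟩ := hFne
      exact ⟨p, hp, fun h => absurd h ht⟩
  choose Ψ hΨF hΨe using hΨex
  have hreal : Realizes G F T Ψ := by
    intro t ht
    refine ⟨hΨF t, fun i => ?_⟩
    rw [hTu t, ← hΨe t ((hTmem t).mp ht)]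
  -- T is fully reduced
  have hTfull : T.FullyReduced := by
    intro i x hdom
    obtain ⟨hx, x', hx', hlt⟩ := hdom
    refine hGbfull i x ⟨hx, x', hx', ?_⟩
    intro a ha
    have h1 := hlt a ha
    have e1 : T.u (Function.update a i x) i = m i * G.u (Function.update a i x) i + b i :=
      hmb i _ (hV _ (memUpd a i x ha hx))
    have e2 : T.u (Function.update a i x') i = m i * G.u (Function.update a i x') i + b i :=
      hmb i _ (hV _ (memUpd a i x' ha hx'))
    rw [e1, e2] at h1
    have hmi := hm i
    rw [hu_eq]
    nlinarith
  have hTred : Game.IsReduction T T := ⟨Relation.ReflTransGen.refl, hTfull⟩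
  -- the identity isomorphism
  have hiso : Gb.Iso T (fun _ x => x) := by
    refine ⟨fun i => ?_, m, b, hm, fun a ha i => ?_⟩
    · exact Set.bijOn_id _
    · rw [hu_eq]
      exact hmb i _ (hV a ha)
  have hspi : IsoTokenSPI G Gb T T := by
    refine ⟨fun _ x => x, hiso, fun a ha => ?_, ?_⟩
    · exact hpar _ (hV a ha)
    · obtain ⟨v, ⟨a, ha, rfl⟩, hsp⟩ := hstrict
      exact ⟨a, ha, hsp⟩
  -- effect on payoffs under every isomorphism
  have heff : ∀ a, Gb.mem a → ∀ φ, Gb.Iso T φ → T.u (fun j => φ j (a j)) = ψ (G.u a) := by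
    intro a ha φ hφ
    obtain ⟨hb, m', b', hm', haf⟩ := hφ
    have hΦmem : ∀ t, Gb.mem t → Gb.mem (fun j => φ j (t j)) := by
      intro t ht j
      exact (hb j).mapsTo (ht j)
    have hΦsurj : ∀ t, Gb.mem t → ∃ s, Gb.mem s ∧ (fun j => φ j (s j)) = t := by
      intro t ht
      have h : ∀ j, ∃ x ∈ Gb.act j, φ j x = t j := by
        intro j
        obtain ⟨x, hx1, hx2⟩ := (hb j).surjOn (ht j)
        exact ⟨x, hx1, hx2⟩
      choose g hg1 hg2 using h
      exact ⟨g, hg1, funext hg2⟩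
    funext i
    set f : ℝ → ℝ := fun x => (m' i * x + b' i - b i) / m i with hf
    have hfmono : StrictMono f := by
      intro x y hxy
      have hmi := hm i
      have hmi' := hm' i
      rw [hf]
      apply div_lt_div_of_pos_right _ hmi
      nlinarith
    have key : ∀ t, Gb.mem t → G.u (fun j => φ j (t j)) i = f (G.u t i) := by
      intro t ht
      have h1 := haf t ht i
      rw [hu_eq] at h1
      have h2 : T.u (fun j => φ j (t j)) i = m i * G.u (fun j => φ j (t j)) i + b i :=
        hmb i _ (hV _ (hΦmem t ht))
      rw [h2] at h1
      rw [hf, eq_div_iff (hm i).ne']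
      linear_combination h1
    set U : Finset ℝ := (Fintype.piFinset Gb.act).image (fun t => G.u t i) with hU
    have hmemU : ∀ t, Gb.mem t → G.u t i ∈ U := by
      intro t ht
      exact Finset.mem_image.mpr ⟨t, Fintype.mem_piFinset.mpr ht, rfl⟩
    have hmapU : ∀ x ∈ U, f x ∈ U := by
      intro x hx
      obtain ⟨t, htm, rfl⟩ := Finset.mem_image.mp hx
      have htm' : Gb.mem t := Fintype.mem_piFinset.mp htm
      rw [← key t htm']
      exact hmemU _ (hΦmem t htm')
    have hsurjU : ∀ y ∈ U, ∃ x ∈ U, f x = y := by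
      intro y hy
      obtain ⟨t, htm, rfl⟩ := Finset.mem_image.mp hy
      have htm' : Gb.mem t := Fintype.mem_piFinset.mp htm
      obtain ⟨s, hs, hst⟩ := hΦsurj t htm'
      refine ⟨G.u s i, hmemU s hs, ?_⟩
      rw [← key s hs, hst]
    have hfix : f (G.u a i) = G.u a i :=
      strictMono_fix f hfmono U hmapU hsurjU _ (hmemU a ha)
    have hGueq : G.u (fun j => φ j (a j)) i = G.u a i := by
      rw [key a ha, hfix]
    calc T.u (fun j => φ j (a j)) i
        = m i * G.u (fun j => φ j (a j)) i + b i := hmb i _ (hV _ (hΦmem a ha))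
      _ = m i * G.u a i + b i := by rw [hGueq]
      _ = ψ (G.u a) i := (hmb i _ (hV a ha)).symm
  have hmain : ∃ T Tb : Game n, ∃ Ψ : (Fin n → ℕ) → ((Fin n → ℕ) → ℝ),
      Realizes G F T Ψ ∧ Game.IsReduction T Tb ∧ IsoTokenSPI G Gb T Tb ∧
      ∀ a, Gb.mem a → ∀ φ, Gb.Iso Tb φ → T.u (fun j => φ j (a j)) = ψ (G.u a) :=
    ⟨T, T, Ψ, hreal, hTred, hspi, heff⟩
  refine ⟨hmain, ?_, fun _ => ?_⟩
  · rintro ⟨T', Tb', Ψ', hreal', ⟨hTred', hTbfull'⟩, φ₀, ⟨hbij, mm, bb, hmm, haf⟩, hPar, a0, ha0, hSP⟩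
    obtain ⟨hTu_eq, hTbmem⟩ := reflTrans_u_sub hTred'
    have hkey : ∀ a, Gb.mem a → T'.u (fun j => φ₀ j (a j)) = fun i => mm i * G.u a i + bb i := by
      intro a ha
      funext i
      have h := haf a ha i
      rw [hTu_eq, hu_eq] at h
      exact h
    refine ⟨fun v i => mm i * v i + bb i, ?_, ?_, ?_, fun i => ⟨mm i, bb i, hmm i, fun v _ => rfl⟩⟩
    · rintro v ⟨a, ha, rfl⟩
      have hmemT : T'.mem (fun j => φ₀ j (a j)) := by
        apply hTbmem
        intro j
        exact (hbij j).mapsTo (ha j)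
      obtain ⟨hΨF', hΨu'⟩ := hreal' _ hmemT
      refine ⟨Ψ' _, hΨF', ?_⟩
      funext i
      rw [← hΨu' i]
      rw [hkey a ha]
    · rintro v ⟨a, ha, rfl⟩
      have h := hPar a ha
      rwa [hkey a ha] at h
    · refine ⟨G.u a0, ⟨a0, ha0, rfl⟩, ?_⟩
      rwa [hkey a0 ha0] at hSP
  · obtain ⟨T0, Tb0, Ψ0, h1, h2, h3, _⟩ := hmain
    exact ⟨T0, Tb0, Ψ0, h1, h2, h3⟩


end SPIs
end

section
/- With V, R, and V* as in the context: if V* = ∅, then a valid utility remapping function ψ : V → R exists (equivalently, the two-player game G admits an isomorphism correlated token SPI). -/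
namespace SPIs

/-- `V = u(Ā)`: the set of payoff vectors of the reduced game. -/
def Vset (G Gb : Game 2) : Set (Fin 2 → ℝ) := G.u '' {a | Gb.mem a}

/-- `R = u(Δ(A))`: the convex hull of the set of payoff vectors of `G`. -/
def Rset (G : Game 2) : Set (Fin 2 → ℝ) := convexHull ℝ (G.u '' {a | G.mem a})

/-- `V*`: the set of points of `V` that cannot be strictly Pareto improved within `R`. -/
def VstarSet (G Gb : Game 2) : Set (Fin 2 → ℝ) :=
  {v ∈ Vset G Gb | ¬ ∃ r ∈ Rset G, StrictPareto v r}



lemma ivt_aux (a b : ℝ) (ha : a ≤ 0) (hb : 0 ≤ b) :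
    ∃ l : ℝ, 0 ≤ l ∧ l ≤ 1 ∧ l * b + (1 - l) * a = 0 := by
  rcases eq_or_lt_of_le (ha.trans hb) with h | h
  · exact ⟨0, le_refl 0, by norm_num, by nlinarith⟩
  · refine ⟨-a / (b - a), div_nonneg (by linarith) (by linarith), ?_, ?_⟩
    · rw [div_le_one (by linarith)]; linarith
    · have hba : b - a ≠ 0 := by linarith
      field_simp
      ring

lemma two_cases (i j k : Fin 2) (hij : i ≠ j) : k = i ∨ k = j := by
  fin_cases i <;> fin_cases j <;> fin_cases k <;> simp_all

lemma caseA (R : Set (Fin 2 → ℝ)) (hconv : Convex ℝ R) (v r w M : Fin 2 → ℝ)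
    (i j : Fin 2) (hij : i ≠ j)
    (hvR : v ∈ R) (hrR : r ∈ R) (hwR : w ∈ R)
    (hpar : ∀ k, v k ≤ r k) (hstrict : ∃ k, v k < r k)
    (hvM : ∀ k, v k ≤ M k) (hwj : w j = M j) (hwi : w i ≤ M i)
    (hdj : 0 < M j - v j)
    (hF : 0 ≤ (M j - v j) * (r i - v i) - (M i - v i) * (r j - v j)) :
    ∃ s : ℝ, 0 < s ∧ ∀ t : ℝ, 0 ≤ t → t ≤ s → v + t • (M - v) ∈ R := by
  have hdi : 0 ≤ M i - v i := by have := hvM i; linarith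
  have hFw : (M j - v j) * (w i - v i) - (M i - v i) * (w j - v j) ≤ 0 := by
    rw [hwj]; nlinarith [hwi, hdi]
  obtain ⟨l, hl0, hl1, hl⟩ := ivt_aux _ _ hFw hF
  have hpR : (l • r + (1 - l) • w : Fin 2 → ℝ) ∈ R :=
    hconv hrR hwR hl0 (by linarith) (by ring)
  set p : Fin 2 → ℝ := l • r + (1 - l) • w with hp
  have hpk : ∀ k, p k = l * r k + (1 - l) * w k := by
    intro k; simp [hp, Pi.add_apply, Pi.smul_apply, smul_eq_mul]
  have hFp : (M j - v j) * (p i - v i) - (M i - v i) * (p j - v j) = 0 := by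
    rw [hpk i, hpk j]; linear_combination hl
  have hpj0 : 0 ≤ p j - v j := by
    rw [hpk j, hwj]; nlinarith [hpar j]
  have hpj : 0 < p j - v j := by
    rcases lt_or_eq_of_le hpj0 with h | h
    · exact h
    · exfalso
      have hpjv : p j - v j = 0 := h.symm
      have hsum : l * (r j - v j) + (1 - l) * (M j - v j) = 0 := by
        rw [hpk j, hwj] at hpjv; linarith
      have h1 : 0 ≤ l * (r j - v j) := mul_nonneg hl0 (by linarith [hpar j])
      have h2 : 0 ≤ (1 - l) * (M j - v j) := mul_nonneg (by linarith) hdj.le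
      have h2z : (1 - l) * (M j - v j) = 0 := by linarith
      have hl1' : l = 1 := by
        rcases mul_eq_zero.mp h2z with h' | h'
        · linarith
        · linarith
      have hrj : r j = v j := by
        have : l * (r j - v j) = 0 := by linarith
        rw [hl1'] at this; linarith
      have hpii : p i - v i = r i - v i := by rw [hpk i, hl1']; ring
      have hri : r i = v i := by
        have hz : (M j - v j) * (r i - v i) = 0 := by
          rw [← hpii]; nlinarith [hFp, hpjv]
        rcases mul_eq_zero.mp hz with h' | h'
        · linarith
        · linarith
      obtain ⟨k, hk⟩ := hstrict
      rcases two_cases i j k hij with rfl | rfl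
      · linarith
      · linarith
  have hdjne : (M j - v j) ≠ 0 := ne_of_gt hdj
  refine ⟨(p j - v j) / (M j - v j), div_pos hpj hdj, fun t ht0 hts => ?_⟩
  set s : ℝ := (p j - v j) / (M j - v j) with hs
  have hspos : 0 < s := div_pos hpj hdj
  have hsdj : s * (M j - v j) = p j - v j := by
    rw [hs]; field_simp
  have hsdi : s * (M i - v i) = p i - v i := by
    apply mul_left_cancel₀ hdjne
    calc (M j - v j) * (s * (M i - v i)) = (M i - v i) * (s * (M j - v j)) := by ring
    _ = (M i - v i) * (p j - v j) := by rw [hsdj]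
    _ = (M j - v j) * (p i - v i) := by linarith [hFp]
  have hpeq : p = v + s • (M - v) := by
    funext k
    rcases two_cases i j k hij with rfl | rfl
    · simp only [Pi.add_apply, Pi.smul_apply, Pi.sub_apply, smul_eq_mul]; linarith [hsdi]
    · simp only [Pi.add_apply, Pi.smul_apply, Pi.sub_apply, smul_eq_mul]; linarith [hsdj]
  have hc0 : 0 ≤ t / s := div_nonneg ht0 hspos.le
  have hc1 : t / s ≤ 1 := (div_le_one hspos).mpr hts
  have heq : v + t • (M - v) = (1 - t / s) • v + (t / s) • p := by
    rw [hpeq]; funext k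
    simp only [Pi.add_apply, Pi.smul_apply, Pi.sub_apply, smul_eq_mul]
    field_simp
    ring
  rw [heq]
  exact hconv hvR hpR (by linarith) hc0 (by ring)


lemma exists_dir (R : Set (Fin 2 → ℝ)) (hconv : Convex ℝ R) (v r p1 p2 M : Fin 2 → ℝ)
    (hvR : v ∈ R) (hrR : r ∈ R) (hp1R : p1 ∈ R) (hp2R : p2 ∈ R)
    (hpar : ∀ k, v k ≤ r k) (hstrict : ∃ k, v k < r k)
    (hvM : ∀ k, v k ≤ M k)
    (hp1 : p1 0 = M 0) (hp1' : p1 1 ≤ M 1)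
    (hp2 : p2 1 = M 1) (hp2' : p2 0 ≤ M 0) :
    ∃ s : ℝ, 0 < s ∧ ∀ t : ℝ, 0 ≤ t → t ≤ s → v + t • (M - v) ∈ R := by
  have h01 : (0 : Fin 2) ≠ 1 := by decide
  have h10 : (1 : Fin 2) ≠ 0 := by decide
  by_cases h0 : M 0 = v 0
  · by_cases h1 : M 1 = v 1
    · -- M = v
      have hMv : M = v := by
        funext k; rcases two_cases 0 1 k h01 with rfl | rfl
        · exact h0
        · exact h1
      refine ⟨1, one_pos, fun t _ _ => ?_⟩
      rw [hMv]
      simp [hvR]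
    · -- d0 = 0, d1 > 0
      have hd1 : 0 < M 1 - v 1 := lt_of_le_of_ne (by linarith [hvM 1]) (fun h => h1 (by linarith))
      refine caseA R hconv v r p2 M 0 1 h01 hvR hrR hp2R hpar hstrict hvM hp2 hp2' hd1 ?_
      rw [h0]
      nlinarith [mul_nonneg hd1.le (sub_nonneg.mpr (hpar 0))]
  · have hd0 : 0 < M 0 - v 0 := lt_of_le_of_ne (by linarith [hvM 0]) (fun h => h0 (by linarith))
    rcases le_total 0 ((M 1 - v 1) * (r 0 - v 0) - (M 0 - v 0) * (r 1 - v 1)) with hFr | hFr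
    · by_cases h1 : M 1 = v 1
      · -- d1 = 0, use (1,0) with p1
        refine caseA R hconv v r p1 M 1 0 h10 hvR hrR hp1R hpar hstrict hvM hp1 hp1' hd0 ?_
        rw [h1]
        nlinarith [mul_nonneg hd0.le (sub_nonneg.mpr (hpar 1))]
      · have hd1 : 0 < M 1 - v 1 := lt_of_le_of_ne (by linarith [hvM 1]) (fun h => h1 (by linarith))
        exact caseA R hconv v r p2 M 0 1 h01 hvR hrR hp2R hpar hstrict hvM hp2 hp2' hd1 hFr
    · refine caseA R hconv v r p1 M 1 0 h10 hvR hrR hp1R hpar hstrict hvM hp1 hp1' hd0 ?_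
      linarith


lemma red_act_subset {G H : Game 2} (h : Relation.ReflTransGen Game.RemoveStep G H) :
    ∀ i, H.act i ⊆ G.act i := by
  induction h with
  | refl => exact fun i => subset_rfl
  | tail _ step ih =>
    obtain ⟨i0, x, _, hact, _⟩ := step
    intro i
    refine subset_trans ?_ (ih i)
    rw [hact]
    by_cases hii : i = i0
    · subst hii
      simp only [Function.update_self]
      exact Finset.erase_subset _ _
    · rw [Function.update_of_ne hii]


/-- Case 1 of Theorem 4 of the paper: if `V* = ∅`, then a valid utility
remapping function `ψ : V → R` exists. -/
theorem correlated_token_spi_case_Vstar_empty (G Gb : Game 2)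
    (hred : Game.IsReduction G Gb)
    (hV : (Vset G Gb).Nontrivial)
    (hstar : VstarSet G Gb = ∅) :
    ∃ ψ : (Fin 2 → ℝ) → Fin 2 → ℝ, ValidRemap (Vset G Gb) (Rset G) ψ := by
  classical
  have hmem : ∀ a, Gb.mem a ↔ a ∈ Gb.outcomes := by
    intro a
    simp [Game.mem, Game.outcomes, Fintype.mem_piFinset]
  have hsub : ∀ i, Gb.act i ⊆ G.act i := red_act_subset hred.1
  have hVR : Vset G Gb ⊆ Rset G := by
    rintro v ⟨a, ha, rfl⟩
    exact subset_convexHull ℝ _ ⟨a, fun i => hsub i (ha i), rfl⟩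
  have hconv : Convex ℝ (Rset G) := convex_convexHull ℝ _
  -- the set of reduced outcomes is nonempty
  obtain ⟨x0, hx0⟩ := hV.nonempty
  obtain ⟨a0, ha0, _⟩ := hx0
  have hSne : Gb.outcomes.Nonempty := ⟨a0, (hmem a0).mp ha0⟩
  -- utopia point of V
  have hMex : ∃ M : Fin 2 → ℝ, ∀ i,
      (∀ a ∈ Gb.outcomes, G.u a i ≤ M i) ∧ ∃ a ∈ Gb.outcomes, G.u a i = M i := by
    refine ⟨fun i => (Gb.outcomes.image fun a => G.u a i).max' (hSne.image _),
      fun i => ⟨?_, ?_⟩⟩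
    · intro a ha
      exact Finset.le_max' (Gb.outcomes.image fun a => G.u a i) (G.u a i)
        (Finset.mem_image_of_mem (fun a => G.u a i) ha)
    · have h := Finset.max'_mem (Gb.outcomes.image fun a => G.u a i) (hSne.image _)
      rw [Finset.mem_image] at h
      exact h
  obtain ⟨M, hM⟩ := hMex
  have hMub : ∀ v ∈ Vset G Gb, ∀ i, v i ≤ M i := by
    rintro v ⟨a, ha, rfl⟩ i
    exact (hM i).1 a ((hmem a).mp ha)
  have hMat : ∀ i, ∃ v ∈ Vset G Gb, v i = M i := by
    intro i
    obtain ⟨a, haS, hfa⟩ := (hM i).2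
    exact ⟨G.u a, ⟨a, (hmem a).mpr haS, rfl⟩, hfa⟩
  -- strict improvements exist everywhere
  have himp : ∀ v ∈ Vset G Gb, ∃ r ∈ Rset G, (∀ k, v k ≤ r k) ∧ ∃ i, v i < r i := by
    intro v hv
    rcases Classical.em (∃ r ∈ Rset G, StrictPareto v r) with ⟨r, hr, h1, h2⟩ | hn
    · exact ⟨r, hr, h1, h2⟩
    · exfalso
      have : v ∈ VstarSet G Gb := ⟨hv, hn⟩
      rw [hstar] at this
      exact this
  obtain ⟨p1, hp1V, hp1⟩ := hMat 0
  obtain ⟨p2, hp2V, hp2⟩ := hMat 1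
  have hdir : ∀ a ∈ Gb.outcomes, ∃ s : ℝ, 0 < s ∧
      ∀ t : ℝ, 0 ≤ t → t ≤ s → G.u a + t • (M - G.u a) ∈ Rset G := by
    intro a ha
    have hv : G.u a ∈ Vset G Gb := ⟨a, (hmem a).mpr ha, rfl⟩
    obtain ⟨r, hrR, hrpar, hrstrict⟩ := himp _ hv
    exact exists_dir (Rset G) hconv (G.u a) r p1 p2 M (hVR hv) hrR (hVR hp1V) (hVR hp2V)
      hrpar hrstrict (hMub _ hv) hp1 (hMub _ hp1V 1) hp2 (hMub _ hp2V 0)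
  choose σ hσ1 hσ2 using hdir
  have hTne : (Gb.outcomes.attach.image fun a => σ a.1 a.2).Nonempty :=
    (Finset.attach_nonempty_iff.mpr hSne).image _
  set t : ℝ := min 2⁻¹ ((Gb.outcomes.attach.image fun a => σ a.1 a.2).min' hTne) with ht
  have ht0 : 0 < t := by
    refine lt_min (by norm_num) ?_
    rw [Finset.lt_min'_iff]
    rintro y hy
    rw [Finset.mem_image] at hy
    obtain ⟨a, _, rfl⟩ := hy
    exact hσ1 a.1 a.2
  have ht1 : t ≤ 2⁻¹ := min_le_left _ _
  have htle : ∀ a, ∀ ha : a ∈ Gb.outcomes, t ≤ σ a ha := by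
    intro a ha
    exact le_trans (min_le_right _ _)
      (Finset.min'_le _ _ (Finset.mem_image.mpr ⟨⟨a, ha⟩, Finset.mem_attach _ _, rfl⟩))
  refine ⟨fun v => v + t • (M - v), ?_, ?_, ?_, ?_⟩
  · rintro v ⟨a, ha, rfl⟩
    exact hσ2 a ((hmem a).mp ha) t ht0.le (htle a _)
  · intro v hv i
    have := hMub v hv i
    simp only [Pi.add_apply, Pi.smul_apply, Pi.sub_apply, smul_eq_mul]
    nlinarith [ht0.le]
  · obtain ⟨x, hx, y, hy, hxy⟩ := hV
    have hne : ∃ i, x i ≠ y i := by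
      by_contra h
      push_neg at h
      exact hxy (funext h)
    obtain ⟨i, hi⟩ := hne
    rcases lt_or_gt_of_ne hi with h | h
    · refine ⟨x, hx, fun k => ?_, i, ?_⟩
      · have := hMub x hx k
        simp only [Pi.add_apply, Pi.smul_apply, Pi.sub_apply, smul_eq_mul]
        nlinarith [ht0.le]
      · have := hMub y hy i
        simp only [Pi.add_apply, Pi.smul_apply, Pi.sub_apply, smul_eq_mul]
        nlinarith [ht0]
    · refine ⟨y, hy, fun k => ?_, i, ?_⟩
      · have := hMub y hy k
        simp only [Pi.add_apply, Pi.smul_apply, Pi.sub_apply, smul_eq_mul]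
        nlinarith [ht0.le]
      · have := hMub x hx i
        simp only [Pi.add_apply, Pi.smul_apply, Pi.sub_apply, smul_eq_mul]
        nlinarith [ht0]
  · intro i
    refine ⟨1 - t, t * M i, by linarith, fun v hv => ?_⟩
    simp only [Pi.add_apply, Pi.smul_apply, Pi.sub_apply, smul_eq_mul]
    ring

end SPIs
end

section
/- With V, R, V*, v_i^min, v_i^max as in the context: if V* = {v*} consists of a single point and v*_i ∈ {v_i^min, v_i^max} for both players i = 1, 2, then a valid utility remapping function ψ : V → R exists. -/
namespace SPIs

/-!
Let `p = v*`. If `p` is maximal in both coordinates, `ψ v = (v + p) / 2` works. Otherwise `p` is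
minimal in some coordinate `i`; since no point of `R` strictly Pareto improves `p`, every point of
`R` that is at least `p` in coordinate `i` is at most `p` in the other coordinate `j`, so `p` is
the corner of `V` at `(min_i, max_j)`. Then `ψ` keeps coordinate `i` and contracts coordinate `j`
towards `p j` by a factor `m < 1`. Each `v ≠ p` with `p i < v i` has a strict improvement
`r ∈ R`, and the point of the segment `[p, r]` lying above `v` is strictly higher than `v` in
coordinate `j`; so `R` contains a vertical segment above `v`, which contains `ψ v` once `m` is close
to `1`. As `V` is finite, one `m` serves all of `V`.
-/

open Topology

namespace Game

variable {n : ℕ}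

theorem RemoveStep.mem {G G' : Game n} (h : RemoveStep G G') {a : Fin n → ℕ} (ha : G'.mem a) :
    G.mem a := by
  obtain ⟨i, x, -, hact, -⟩ := h
  intro k
  have hk := ha k
  rw [hact] at hk
  rcases eq_or_ne k i with rfl | hne
  · exact Finset.mem_of_mem_erase (by rwa [Function.update_self] at hk)
  · rwa [Function.update_of_ne hne] at hk

theorem mem_of_reflTransGen_removeStep {G H : Game n} (h : Relation.ReflTransGen RemoveStep G H)
    {a : Fin n → ℕ} (ha : H.mem a) : G.mem a := by
  induction h with
  | refl => exact ha
  | tail _ hstep ih => exact ih (hstep.mem ha)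

theorem setOf_mem_finite (G : Game n) : {a | G.mem a}.Finite :=
  (Set.Finite.pi fun i => (G.act i).finite_toSet).subset fun _ ha i _ => ha i

end Game

theorem vset_subset_rset {G Gb : Game 2} (h : Relation.ReflTransGen Game.RemoveStep G Gb) :
    Vset G Gb ⊆ Rset G := by
  rintro _ ⟨a, ha, rfl⟩
  exact subset_convexHull ℝ _ ⟨a, Game.mem_of_reflTransGen_removeStep h ha, rfl⟩

theorem vset_finite (G Gb : Game 2) : (Vset G Gb).Finite :=
  Gb.setOf_mem_finite.image G.u

theorem pareto_fin_two {i j : Fin 2} (hij : i ≠ j) {x y : Fin 2 → ℝ} :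
    Pareto x y ↔ x i ≤ y i ∧ x j ≤ y j := by
  refine ⟨fun h => ⟨h i, h j⟩, fun ⟨hi, hj⟩ k => ?_⟩
  obtain rfl | rfl : k = i ∨ k = j := by omega
  exacts [hi, hj]

theorem eq_of_pareto_of_not_strictPareto {n : ℕ} {R : Set (Fin n → ℝ)} {p q : Fin n → ℝ}
    (hp : ¬ ∃ r ∈ R, StrictPareto p r) (hq : q ∈ R) (hpq : Pareto p q) : q = p := by
  by_contra hne
  refine hp ⟨q, hq, hpq, ?_⟩
  by_contra! h
  exact hne (funext fun k => le_antisymm (h k) (hpq k))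

theorem validRemap_mul_add {n : ℕ} {V R : Set (Fin n → ℝ)} {c p : Fin n → ℝ}
    (hc₀ : ∀ k, 0 < c k) (hc₁ : ∀ k, c k ≤ 1) (hR : ∀ v ∈ V, c * v + (1 - c) * p ∈ R)
    (hle : ∀ v ∈ V, ∀ k, c k < 1 → v k ≤ p k) (hlt : ∃ v ∈ V, ∃ k, c k < 1 ∧ v k < p k) :
    ValidRemap V R (fun v => c * v + (1 - c) * p) := by
  have gain : ∀ (v : Fin n → ℝ) k,
      (c * v + (1 - c) * p) k - v k = (1 - c k) * (p k - v k) := fun v k => by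
    simp only [Pi.add_apply, Pi.mul_apply, Pi.sub_apply, Pi.one_apply]
    ring
  have pareto : ∀ v ∈ V, Pareto v (c * v + (1 - c) * p) := fun v hv k => by
    have := gain v k
    rcases (hc₁ k).lt_or_eq with hk | hk
    · nlinarith [hle v hv k hk]
    · rw [hk] at this
      linarith
  obtain ⟨v, hv, k, hk, hvk⟩ := hlt
  refine ⟨hR, pareto, ⟨v, hv, pareto v hv, k, ?_⟩,
    fun k => ⟨c k, (1 - c k) * p k, hc₀ k, fun v _ => rfl⟩⟩
  nlinarith [gain v k]

theorem exists_validRemap_of_forall_pareto {n : ℕ} {V R : Set (Fin n → ℝ)} (hR : Convex ℝ R)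
    (hVR : V ⊆ R) (hV : V.Nontrivial) {p : Fin n → ℝ} (hp : p ∈ V) (hmax : ∀ v ∈ V, Pareto v p) :
    ∃ ψ, ValidRemap V R ψ := by
  refine ⟨_, validRemap_mul_add (c := fun _ => 1 / 2) (fun _ => by norm_num) (fun _ => by norm_num)
    (fun v hv => ?_) (fun v hv k _ => hmax v hv k) ?_⟩
  · convert hR (hVR hv) (hVR hp) (by norm_num : (0 : ℝ) ≤ 1 / 2) (by norm_num : (0 : ℝ) ≤ 1 / 2)
      (by norm_num) using 1
    ext k
    simp only [Pi.add_apply, Pi.mul_apply, Pi.sub_apply, Pi.one_apply, Pi.smul_apply, smul_eq_mul]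
    norm_num
  · obtain ⟨v, hv, hvp⟩ := hV.exists_ne p
    by_contra! h
    exact hvp (funext fun k => le_antisymm (hmax v hv k) (h v hv k (by norm_num)))

theorem Convex.update_mem_of_le {n : ℕ} {R : Set (Fin n → ℝ)} (hR : Convex ℝ R) {v w : Fin n → ℝ}
    (hv : v ∈ R) (hw : w ∈ R) {j : Fin n} (hvw : ∀ k ≠ j, w k = v k) {t : ℝ} (hvt : v j ≤ t)
    (htw : t ≤ w j) : Function.update v j t ∈ R := by
  rcases hvt.eq_or_lt with rfl | hvt
  · rwa [Function.update_eq_self]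
  have hd : 0 < w j - v j := by linarith
  set θ := (t - v j) / (w j - v j)
  convert hR hv hw (a := 1 - θ) (b := θ) (by rw [sub_nonneg, div_le_one hd]; linarith)
    (div_nonneg (by linarith) hd.le) (by ring) using 1
  ext k
  simp only [Function.update_apply, Pi.add_apply, Pi.smul_apply, smul_eq_mul]
  split_ifs with hk
  · subst hk
    have : θ * (w k - v k) = t - v k := div_mul_cancel₀ _ hd.ne'
    linarith
  · rw [hvw k hk]
    ring

theorem update_one_mul_add {n : ℕ} (v p : Fin n → ℝ) (j : Fin n) (m : ℝ) :
    Function.update (1 : Fin n → ℝ) j m * v + (1 - Function.update (1 : Fin n → ℝ) j m) * p =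
      Function.update v j (m * v j + (1 - m) * p j) := by
  ext k
  rcases eq_or_ne k j with rfl | hk <;> simp [*]

section Corner

variable {R : Set (Fin 2 → ℝ)} {p : Fin 2 → ℝ} {i j : Fin 2}

theorem apply_le_of_not_strictPareto (hp : ¬ ∃ r ∈ R, StrictPareto p r) (hij : i ≠ j)
    {q : Fin 2 → ℝ} (hq : q ∈ R) (hqi : p i ≤ q i) : q j ≤ p j := by
  by_contra! h
  have := eq_of_pareto_of_not_strictPareto hp hq ((pareto_fin_two hij).2 ⟨hqi, h.le⟩)
  rw [this] at h
  exact h.false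

theorem apply_lt_of_not_strictPareto (hp : ¬ ∃ r ∈ R, StrictPareto p r) (hij : i ≠ j)
    {q : Fin 2 → ℝ} (hq : q ∈ R) (hqi : p i ≤ q i) (hqp : q ≠ p) : q j < p j := by
  refine (apply_le_of_not_strictPareto hp hij hq hqi).lt_of_ne fun h => hqp ?_
  exact eq_of_pareto_of_not_strictPareto hp hq ((pareto_fin_two hij).2 ⟨hqi, h.ge⟩)

theorem exists_mem_above_of_strictPareto (hR : Convex ℝ R) (hpR : p ∈ R)
    (hp : ¬ ∃ r ∈ R, StrictPareto p r) (hij : i ≠ j) {v r : Fin 2 → ℝ} (hr : r ∈ R)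
    (hvr : StrictPareto v r) (hvi : p i < v i) (hvj : v j < p j) :
    ∃ w ∈ R, w i = v i ∧ v j < w j ∧ w j ≤ p j := by
  have hrj := apply_le_of_not_strictPareto hp hij hr (hvi.le.trans (hvr.1 i))
  have hvr' := (pareto_fin_two hij).1 hvr.1
  set a := v i - p i
  set c := r i - v i
  have ha : 0 < a := sub_pos.2 hvi
  have hc : 0 ≤ c := sub_nonneg.2 hvr'.1
  have hac : a + c ≠ 0 := by positivity
  have hgain : 0 < c * (p j - v j) + a * (r j - v j) := by
    obtain ⟨k, hk⟩ := hvr.2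
    obtain rfl | rfl : k = i ∨ k = j := by omega
    · nlinarith [mul_nonneg ha.le (sub_nonneg.2 hvr'.2)]
    · nlinarith [mul_nonneg (sub_nonneg.2 hvr'.1) (sub_nonneg.2 hvj.le)]
  have hw : ∀ k, c / (a + c) * p k + a / (a + c) * r k =
      v k + (c * (p k - v k) + a * (r k - v k)) / (a + c) := fun k => by
    field_simp
    ring
  -- the point of the segment `[p, r]` with `i`-coordinate `v i`
  refine ⟨(c / (a + c)) • p + (a / (a + c)) • r,
    hR hpR hr (by positivity) (by positivity) (by rw [← add_div, add_comm, div_self hac]),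
    ?_, ?_, ?_⟩ <;>
    simp only [Pi.add_apply, Pi.smul_apply, smul_eq_mul, hw]
  · have : c * (p i - v i) + a * (r i - v i) = 0 := by ring
    simp [this]
  · have : 0 < (c * (p j - v j) + a * (r j - v j)) / (a + c) := by positivity
    linarith
  · have : (c * (p j - v j) + a * (r j - v j)) / (a + c) ≤ p j - v j := by
      rw [div_le_iff₀ (by positivity)]
      nlinarith
    linarith

theorem eventually_update_mem (hR : Convex ℝ R) (hpR : p ∈ R) (hp : ¬ ∃ r ∈ R, StrictPareto p r)
    (hij : i ≠ j) {v : Fin 2 → ℝ} (hv : v ∈ R) (hvi : p i ≤ v i)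
    (hdom : v ≠ p → ∃ r ∈ R, StrictPareto v r) :
    ∀ᶠ m in 𝓝[<] (1 : ℝ), Function.update v j (m * v j + (1 - m) * p j) ∈ R := by
  rcases (apply_le_of_not_strictPareto hp hij hv hvi).eq_or_lt with hvj | hvj
  · refine Filter.Eventually.of_forall fun m => ?_
    rwa [← hvj, show m * v j + (1 - m) * v j = v j by ring, Function.update_eq_self]
  obtain ⟨w, hw, hwi, hvw, hwp⟩ : ∃ w ∈ R, w i = v i ∧ v j < w j ∧ w j ≤ p j := by
    rcases hvi.eq_or_lt with hpv | hpv
    · exact ⟨p, hpR, hpv, hvj, le_rfl⟩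
    obtain ⟨r, hr, hvr⟩ := hdom fun h => by rw [h] at hvj; exact hvj.false
    exact exists_mem_above_of_strictPareto hR hpR hp hij hr hvr hpv hvj
  have hd : 0 < p j - v j := sub_pos.2 hvj
  have hθ : 0 < (w j - v j) / (p j - v j) := div_pos (sub_pos.2 hvw) hd
  filter_upwards [Ioo_mem_nhdsLT (sub_lt_self 1 hθ)] with m ⟨hm₀, hm₁⟩
  refine Convex.update_mem_of_le hR hv hw (fun k hk => ?_) (by nlinarith) ?_
  · obtain rfl : k = i := by omega
    exact hwi
  · rw [sub_lt_comm, lt_div_iff₀ hd] at hm₀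
    linarith

theorem exists_validRemap_of_forall_apply_le (hR : Convex ℝ R) {V : Set (Fin 2 → ℝ)} (hVR : V ⊆ R)
    (hVfin : V.Finite) (hV : V.Nontrivial) (hpV : p ∈ V) (hp : ¬ ∃ r ∈ R, StrictPareto p r)
    (hdom : ∀ v ∈ V, v ≠ p → ∃ r ∈ R, StrictPareto v r) (hij : i ≠ j)
    (hmin : ∀ v ∈ V, p i ≤ v i) : ∃ ψ, ValidRemap V R ψ := by
  obtain ⟨m, hmR, hm₀, hm₁⟩ :
      ∃ m : ℝ, (∀ v ∈ V, Function.update v j (m * v j + (1 - m) * p j) ∈ R) ∧ 0 < m ∧ m < 1 :=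
    ((hVfin.eventually_all.2 fun v hv => eventually_update_mem hR (hVR hpV) hp hij (hVR hv)
      (hmin v hv) (hdom v hv)).and (Ioo_mem_nhdsLT one_pos)).exists
  have hc : ∀ k, k ≠ j → Function.update (1 : Fin 2 → ℝ) j m k = 1 := fun k hk => by simp [hk]
  refine ⟨_, validRemap_mul_add (c := Function.update 1 j m) (p := p) (fun k => ?_) (fun k => ?_)
    (fun v hv => by rw [update_one_mul_add]; exact hmR v hv) (fun v hv k hk => ?_) ?_⟩
  · rcases eq_or_ne k j with rfl | hk <;> simp [*]
  · rcases eq_or_ne k j with rfl | hk <;> simp [*, hm₁.le]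
  · obtain rfl : k = j := by_contra fun h => by rw [hc k h] at hk; exact hk.false
    exact apply_le_of_not_strictPareto hp hij (hVR hv) (hmin v hv)
  · obtain ⟨v, hv, hvp⟩ := hV.exists_ne p
    exact ⟨v, hv, j, by simpa using hm₁,
      apply_lt_of_not_strictPareto hp hij (hVR hv) (hmin v hv) hvp⟩

end Corner

/-- Case 2(a) of Theorem 4 of the paper: if `V* = {v*}` and `v*` is extremal
(`v*_i ∈ {v_i^min, v_i^max}`) for both players, then a valid utility remapping function
`ψ : V → R` exists. -/
theorem correlated_token_spi_case_both_extremal (G Gb : Game 2)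
    (hred : Game.IsReduction G Gb)
    (hV : (Vset G Gb).Nontrivial)
    (vstar vmin vmax : Fin 2 → ℝ)
    (hmin : ∀ i, IsLeast ((fun v => v i) '' Vset G Gb) (vmin i))
    (hmax : ∀ i, IsGreatest ((fun v => v i) '' Vset G Gb) (vmax i))
    (hstar : VstarSet G Gb = {vstar})
    (hext : ∀ i, vstar i = vmin i ∨ vstar i = vmax i) :
    ∃ ψ : (Fin 2 → ℝ) → Fin 2 → ℝ, ValidRemap (Vset G Gb) (Rset G) ψ := by
  have hVR := vset_subset_rset hred.1
  obtain ⟨hpV, hp⟩ : vstar ∈ VstarSet G Gb := hstar ▸ rfl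
  have hdom : ∀ v ∈ Vset G Gb, v ≠ vstar → ∃ r ∈ Rset G, StrictPareto v r := fun v hv hne => by
    by_contra h
    exact hne (hstar ▸ ⟨hv, h⟩ : v ∈ ({vstar} : Set _))
  have corner := fun i j hij (hi : vstar i = vmin i) =>
    exists_validRemap_of_forall_apply_le (convex_convexHull ℝ _) hVR (vset_finite G Gb) hV hpV hp hdom
      (i := i) (j := j) hij fun v hv => hi ▸ (hmin i).2 ⟨v, hv, rfl⟩
  rcases hext 0 with h0 | h0
  · exact corner 0 1 (by decide) h0
  rcases hext 1 with h1 | h1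
  · exact corner 1 0 (by decide) h1
  refine exists_validRemap_of_forall_pareto (convex_convexHull ℝ _) hVR hV hpV fun v hv k => ?_
  obtain rfl | rfl : k = 0 ∨ k = 1 := by omega
  exacts [h0 ▸ (hmax 0).2 ⟨v, hv, rfl⟩, h1 ▸ (hmax 1).2 ⟨v, hv, rfl⟩]

end SPIs
end

section
/- With V, R, V*, v_i^min, v_i^max as in the context: if V* = {v*} consists of a single point and v*_i ∉ {v_i^min, v_i^max} for both players i = 1, 2, then no valid utility remapping function ψ : V → R exists. -/
namespace SPIs

/-- Case 2(c) of Theorem 4 of the paper: if `V* = {v*}` and `v*` is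
non-extremal for both players, then no valid utility remapping function `ψ : V → R` exists. -/
theorem correlated_token_spi_case_no_extremal (G Gb : Game 2)
    (hred : Game.IsReduction G Gb)
    (hV : (Vset G Gb).Nontrivial)
    (vstar vmin vmax : Fin 2 → ℝ)
    (hmin : ∀ i, IsLeast ((fun v => v i) '' Vset G Gb) (vmin i))
    (hmax : ∀ i, IsGreatest ((fun v => v i) '' Vset G Gb) (vmax i))
    (hstar : VstarSet G Gb = {vstar})
    (hext : ∀ i, vstar i ≠ vmin i ∧ vstar i ≠ vmax i) :
    ¬ ∃ ψ : (Fin 2 → ℝ) → Fin 2 → ℝ, ValidRemap (Vset G Gb) (Rset G) ψ := by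
  rintro ⟨ψ, hmem, hpar, ⟨v0, hv0, hsp⟩, haff⟩
  have hvs : vstar ∈ VstarSet G Gb := by rw [hstar]; rfl
  obtain ⟨hvsV, hvsn⟩ := hvs
  -- ψ vstar = vstar
  have hψv : ψ vstar = vstar := by
    by_contra h
    apply hvsn
    refine ⟨ψ vstar, hmem _ hvsV, hpar _ hvsV, ?_⟩
    by_contra h2
    push_neg at h2
    apply h
    funext i
    exact le_antisymm (h2 i) (hpar _ hvsV i)
  -- m i = 1 for each affine representation
  have hm1 : ∀ i, ∀ m b : ℝ, 0 < m → (∀ v ∈ Vset G Gb, ψ v i = m * v i + b) → m = 1 ∧ b = (1 - m) * vstar i := by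
    intro i m b hm hrep
    have hbs : m * vstar i + b = vstar i := by
      rw [← hrep vstar hvsV, hψv]
    obtain ⟨⟨vlo, hvloV, hvlo⟩, _⟩ := hmin i
    obtain ⟨⟨vhi, hvhiV, hvhi⟩, _⟩ := hmax i
    have hlo : vlo i < vstar i := by
      rcases lt_or_eq_of_le ((hmin i).2 ⟨vstar, hvsV, rfl⟩) with h | h
      · simp only [] at hvlo h; rw [hvlo]; exact h
      · exact absurd h.symm (hext i).1
    have hhi : vstar i < vhi i := by
      rcases lt_or_eq_of_le ((hmax i).2 ⟨vstar, hvsV, rfl⟩) with h | h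
      · simp only [] at hvhi h; rw [hvhi]; exact h
      · exact absurd h (hext i).2
    have h1 : vlo i ≤ m * vlo i + b := by rw [← hrep vlo hvloV]; exact hpar _ hvloV i
    have h2 : vhi i ≤ m * vhi i + b := by rw [← hrep vhi hvhiV]; exact hpar _ hvhiV i
    constructor
    · nlinarith
    · linarith
  -- ψ is identity on V, contradicting strictness at v0
  obtain ⟨i, hi⟩ := hsp.2
  obtain ⟨m, b, hm, hrep⟩ := haff i
  obtain ⟨hm1', hb⟩ := hm1 i m b hm hrep
  have := hrep v0 hv0
  rw [hm1'] at this hb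
  simp at this hb
  rw [this, hb] at hi
  simp at hi

end SPIs
end

section
/- Let G = ({a_1, …, a_n} × {a_1, …, a_n}, u) and G' = ({a'_1, …, a'_{n'}} × {a'_1, …, a'_{n'}}, u') be two-player normal-form games whose utilities take values in [0, 1] and such that in each game each player attains utility 0 at some outcome and utility 1 at some outcome. Define Ĝ as the two-player game in which each player's action set is {a_1, …, a_n} ∪ {â_1, …, â_n} and whose payoffs are: û(a_k, a_l) = u(a_k, a_l); û(a_k, â_l) = û(â_k, a_l) = (1, 1) if k = l and (−1, −1) if k ≠ l; and û(â_k, â_l) = (0, 0); and define Ĝ' from G' analogously. Then: (i) Ĝ and Ĝ' contain no strictly dominated actions; and (ii) G is isomorphic to G' if and only if Ĝ is isomorphic to Ĝ'. -/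
namespace SPIs

/-- Action `x` of Player 1 is strictly dominated in the two-player game with common action
type and utility function `u`. -/
def Dominated1 {A : Type*} (u : A → A → Fin 2 → ℝ) (x : A) : Prop :=
  ∃ x', ∀ y, u x y 0 < u x' y 0

/-- Action `y` of Player 2 is strictly dominated in the two-player game `u`. -/
def Dominated2 {A : Type*} (u : A → A → Fin 2 → ℝ) (y : A) : Prop :=
  ∃ y', ∀ x, u x y 1 < u x y' 1

/-- The two-player game `u` contains no strictly dominated actions. -/
def NoDominated {A : Type*} (u : A → A → Fin 2 → ℝ) : Prop :=
  (∀ x, ¬ Dominated1 u x) ∧ (∀ y, ¬ Dominated2 u y)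

/-- The two-player games `u` and `u'` are isomorphic. -/
def TwoIso {A B : Type*} (u : A → A → Fin 2 → ℝ) (u' : B → B → Fin 2 → ℝ) : Prop :=
  ∃ φ₁ φ₂ : A → B, Function.Bijective φ₁ ∧ Function.Bijective φ₂ ∧
    ∃ m b : Fin 2 → ℝ, (∀ i, 0 < m i) ∧
      ∀ x y i, u' (φ₁ x) (φ₂ y) i = m i * u x y i + b i

/-- The game `Ĝ` constructed from `G = (A × A, u)`: each player's action set is
`A ⊕ A = {a_1, …, a_n} ∪ {â_1, …, â_n}`, payoffs are `u` on the original actions, a matching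
game (`(1,1)` on the diagonal, `(−1,−1)` off it) on mixed original/hatted pairs, and `(0,0)`
on pairs of hatted actions. -/
def hatU {A : Type*} [DecidableEq A] (u : A → A → Fin 2 → ℝ) :
    A ⊕ A → A ⊕ A → Fin 2 → ℝ
  | Sum.inl k, Sum.inl l => u k l
  | Sum.inl k, Sum.inr l => fun _ => if k = l then 1 else -1
  | Sum.inr k, Sum.inl l => fun _ => if k = l then 1 else -1
  | Sum.inr _, Sum.inr _ => fun _ => 0

/-!
Payoffs of `G` range exactly over `[0, 1]` and those of `Ĝ` over `[-1, 1]`, so an isomorphism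
between two such games cannot rescale utilities and must preserve payoffs exactly. An exact
isomorphism of `G` and `G'` extends to `Ĝ` and `Ĝ'` by acting in the same way on hatted actions.
Conversely, a pair of an original and a hatted action pays `±1` while two hatted actions pay `0`;
this forces an exact isomorphism of `Ĝ` and `Ĝ'` to send original actions to original actions,
and it restricts to an isomorphism of `G` and `G'`. No action of `Ĝ` is strictly dominated, since
it earns the maximal payoff `1` against the other copy (`a_k` against `â_k` and vice versa).
-/

open Function Sum

lemma affine_eq_id_of_isLeast_of_isGreatest {S : Set ℝ} {lo hi m b : ℝ} (hlt : lo < hi)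
    (hm : 0 < m) (hlo : IsLeast S lo) (hhi : IsGreatest S hi)
    (hlo' : IsLeast ((fun t => m * t + b) '' S) lo)
    (hhi' : IsGreatest ((fun t => m * t + b) '' S) hi) :
    m = 1 ∧ b = 0 := by
  have hmono : Monotone fun t => m * t + b := fun s t hst => by dsimp only; gcongr
  have e_lo : m * lo + b = lo := (hmono.map_isLeast hlo).unique hlo'
  have e_hi : m * hi + b = hi := (hmono.map_isGreatest hhi).unique hhi'
  have hfactor : (m - 1) * (hi - lo) = 0 := by linear_combination e_hi - e_lo
  have hm1 : m = 1 := by simpa [sub_eq_zero, (sub_pos.2 hlt).ne'] using hfactor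
  exact ⟨hm1, by subst hm1; linarith⟩

lemma exists_eq_sumMap {α β γ δ : Type*} {Φ : α ⊕ β → γ ⊕ δ}
    (hl : ∀ a, ∃ c, Φ (inl a) = inl c) (hr : ∀ b, ∃ d, Φ (inr b) = inr d) :
    ∃ f g, Φ = Sum.map f g := by
  choose f hf using hl
  choose g hg using hr
  exact ⟨f, g, funext fun | inl a => hf a | inr b => hg b⟩

section Games

variable {A B : Type*} {u : A → A → Fin 2 → ℝ} {u' : B → B → Fin 2 → ℝ} {i : Fin 2}

lemma not_dominated1_of_forall_le {x y : A} (h : ∀ x', u x' y 0 ≤ u x y 0) :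
    ¬ Dominated1 u x :=
  fun ⟨x', hx'⟩ => (hx' y).not_ge (h x')

lemma not_dominated2_of_forall_le {x y : A} (h : ∀ y', u x y' 1 ≤ u x y 1) :
    ¬ Dominated2 u y :=
  fun ⟨y', hy'⟩ => (hy' x).not_ge (h y')

def payoffs (u : A → A → Fin 2 → ℝ) (i : Fin 2) : Set ℝ :=
  Set.range fun p : A × A => u p.1 p.2 i

lemma payoffs_eq_image {φ₁ φ₂ : A → B} {m b : ℝ} (h₁ : Surjective φ₁) (h₂ : Surjective φ₂)
    (h : ∀ x y, u' (φ₁ x) (φ₂ y) i = m * u x y i + b) :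
    payoffs u' i = (fun t => m * t + b) '' payoffs u i := by
  rw [payoffs, ← (h₁.prodMap h₂).range_comp, payoffs, ← Set.range_comp]
  exact congrArg Set.range (funext fun p => h p.1 p.2)

lemma isLeast_payoffs {lo : ℝ} (hle : ∀ x y, lo ≤ u x y i) (hlo : ∃ x y, u x y i = lo) :
    IsLeast (payoffs u i) lo := by
  obtain ⟨x, y, hxy⟩ := hlo
  exact ⟨⟨(x, y), hxy⟩, by rintro _ ⟨p, rfl⟩; exact hle p.1 p.2⟩

lemma isGreatest_payoffs {hi : ℝ} (hle : ∀ x y, u x y i ≤ hi) (hhi : ∃ x y, u x y i = hi) :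
    IsGreatest (payoffs u i) hi := by
  obtain ⟨x, y, hxy⟩ := hhi
  exact ⟨⟨(x, y), hxy⟩, by rintro _ ⟨p, rfl⟩; exact hle p.1 p.2⟩

lemma nontrivial_of_exists_payoff_eq {s t : ℝ} (hst : s ≠ t) (hs : ∃ x y, u x y i = s)
    (ht : ∃ x y, u x y i = t) : Nontrivial A := by
  obtain ⟨x, y, rfl⟩ := hs
  obtain ⟨x', y', rfl⟩ := ht
  by_contra hA
  rw [not_nontrivial_iff_subsingleton] at hA
  exact hst (by rw [Subsingleton.elim x x', Subsingleton.elim y y'])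

def StrictIso (u : A → A → Fin 2 → ℝ) (u' : B → B → Fin 2 → ℝ) : Prop :=
  ∃ φ₁ φ₂ : A → B, Bijective φ₁ ∧ Bijective φ₂ ∧ ∀ x y, u' (φ₁ x) (φ₂ y) = u x y

lemma StrictIso.twoIso (h : StrictIso u u') : TwoIso u u' := by
  obtain ⟨φ₁, φ₂, h₁, h₂, h⟩ := h
  exact ⟨φ₁, φ₂, h₁, h₂, 1, 0, fun _ => one_pos, fun x y i => by simp [h]⟩

lemma TwoIso.strictIso {lo hi : Fin 2 → ℝ} (hlt : ∀ i, lo i < hi i)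
    (hlo : ∀ i, IsLeast (payoffs u i) (lo i)) (hhi : ∀ i, IsGreatest (payoffs u i) (hi i))
    (hlo' : ∀ i, IsLeast (payoffs u' i) (lo i)) (hhi' : ∀ i, IsGreatest (payoffs u' i) (hi i))
    (h : TwoIso u u') : StrictIso u u' := by
  obtain ⟨φ₁, φ₂, h₁, h₂, m, b, hm, h⟩ := h
  have hmb (i : Fin 2) : m i = 1 ∧ b i = 0 := by
    have himage := payoffs_eq_image h₁.2 h₂.2 fun x y => h x y i
    exact affine_eq_id_of_isLeast_of_isGreatest (hlt i) (hm i) (hlo i) (hhi i)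
      (himage ▸ hlo' i) (himage ▸ hhi' i)
  refine ⟨φ₁, φ₂, h₁, h₂, fun x y => funext fun i => ?_⟩
  simp [h, hmb]

end Games

section HatGame

variable {A B : Type*} [DecidableEq A] [DecidableEq B]

lemma hatU_inl_inl (u : A → A → Fin 2 → ℝ) (k l : A) : hatU u (inl k) (inl l) = u k l := rfl

lemma hatU_inr_inr (u : A → A → Fin 2 → ℝ) (k l : A) (i : Fin 2) :
    hatU u (inr k) (inr l) i = 0 := rfl

lemma hatU_inl_inr_ne_zero (u : A → A → Fin 2 → ℝ) (k l : A) (i : Fin 2) :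
    hatU u (inl k) (inr l) i ≠ 0 := by
  simp only [hatU]; split_ifs <;> norm_num

lemma hatU_inr_inl_ne_zero (u : A → A → Fin 2 → ℝ) (k l : A) (i : Fin 2) :
    hatU u (inr k) (inl l) i ≠ 0 := by
  simp only [hatU]; split_ifs <;> norm_num

lemma hatU_swap_right (u : A → A → Fin 2 → ℝ) (x : A ⊕ A) (i : Fin 2) :
    hatU u x x.swap i = 1 := by
  rcases x with k | k <;> simp [hatU]

lemma hatU_swap_left (u : A → A → Fin 2 → ℝ) (y : A ⊕ A) (i : Fin 2) :
    hatU u y.swap y i = 1 := by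
  rcases y with k | k <;> simp [hatU]

lemma hatU_flip (u : A → A → Fin 2 → ℝ) (x y : A ⊕ A) : hatU (flip u) x y = hatU u y x := by
  rcases x with k | k <;> rcases y with l | l <;> simp [hatU, flip, eq_comm]

variable {u : A → A → Fin 2 → ℝ} {u' : B → B → Fin 2 → ℝ} {i : Fin 2} {Φ₁ Φ₂ : A ⊕ A → B ⊕ B}

lemma eq_of_hatU_inl_inr_nonneg {k l : A} (h : 0 ≤ hatU u (inl k) (inr l) i) : k = l := by
  by_contra hkl
  simp only [hatU, if_neg hkl] at h
  norm_num at h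

lemma eq_of_hatU_inr_inl_nonneg {k l : A} (h : 0 ≤ hatU u (inr k) (inl l) i) : k = l := by
  by_contra hkl
  simp only [hatU, if_neg hkl] at h
  norm_num at h

lemma hatU_le_one (hu : ∀ x y, u x y i ≤ 1) (x y : A ⊕ A) :
    hatU u x y i ≤ 1 := by
  rcases x with k | k <;> rcases y with l | l <;> simp only [hatU]
  · exact hu k l
  all_goals (try split_ifs) <;> norm_num

lemma neg_one_le_hatU (hu : ∀ x y, -1 ≤ u x y i) (x y : A ⊕ A) :
    -1 ≤ hatU u x y i := by
  rcases x with k | k <;> rcases y with l | l <;> simp only [hatU]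
  · exact hu k l
  all_goals (try split_ifs) <;> norm_num

lemma noDominated_hatU (hu : ∀ x y i, u x y i ≤ 1) : NoDominated (hatU u) :=
  ⟨fun x => not_dominated1_of_forall_le fun x' => by
      rw [hatU_swap_right]; exact hatU_le_one (fun a b => hu a b 0) x' x.swap,
    fun y => not_dominated2_of_forall_le fun y' => by
      rw [hatU_swap_left]; exact hatU_le_one (fun a b => hu a b 1) y.swap y'⟩

lemma isLeast_payoffs_hatU [Nontrivial A] (hu : ∀ x y, 0 ≤ u x y i) :
    IsLeast (payoffs (hatU u) i) (-1) := by
  obtain ⟨k, l, hkl⟩ := exists_pair_ne A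
  refine isLeast_payoffs (neg_one_le_hatU fun x y => by linarith [hu x y]) ⟨inl k, inr l, ?_⟩
  simp [hatU, hkl]

lemma isGreatest_payoffs_hatU [Nonempty A] (hu : ∀ x y, u x y i ≤ 1) :
    IsGreatest (payoffs (hatU u) i) 1 :=
  let k : A := Classical.arbitrary A
  isGreatest_payoffs (hatU_le_one hu) ⟨inl k, inr k, hatU_swap_right u (inl k) i⟩

lemma StrictIso.hat (h : StrictIso u u') : StrictIso (hatU u) (hatU u') := by
  obtain ⟨φ₁, φ₂, h₁, h₂, h⟩ := h
  refine ⟨Sum.map φ₁ φ₂, Sum.map φ₂ φ₁, h₁.sumMap h₂, h₂.sumMap h₁, ?_⟩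
  rintro (k | k) (l | l) <;> simp only [Sum.map_inl, Sum.map_inr, SPIs.hatU]
  · exact h k l
  · simp [h₁.1.eq_iff]
  · simp [h₂.1.eq_iff]

/-- A payoff-preserving map never sends a mixed pair to a pair of hatted actions or conversely.
So if it sent one original action to a hatted one, then step by step it would send every original
action of both players to a hatted one, killing the nonzero payoff of `u`. -/
lemma exists_inl_eq_of_hatU_eq [Nontrivial A] (hu' : ∀ x y, 0 ≤ u' x y i)
    (hu : ∃ x y, u x y i ≠ 0) (H : ∀ x y, hatU u' (Φ₁ x) (Φ₂ y) i = hatU u x y i) (k : A) :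
    ∃ k', Φ₁ (inl k) = inl k' := by
  obtain ⟨a₁, a₂, ha⟩ := exists_pair_ne A
  rcases hk : Φ₁ (inl k) with k' | k'
  · exact ⟨k', rfl⟩
  exfalso
  have col_inr (l : A) : ∃ m, Φ₂ (inr l) = inl m := by
    rcases hl : Φ₂ (inr l) with m | m
    · exact ⟨m, rfl⟩
    · have := H (inl k) (inr l)
      rw [hk, hl, hatU_inr_inr] at this
      exact absurd this.symm (hatU_inl_inr_ne_zero u k l i)
  have row_inl (x : A) : ∃ r, Φ₁ (inl x) = inr r := by
    rcases hx : Φ₁ (inl x) with q | q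
    · have hxl (l : A) : x = l := by
        obtain ⟨m, hm⟩ := col_inr l
        have := H (inl x) (inr l)
        rw [hx, hm, hatU_inl_inl] at this
        exact eq_of_hatU_inl_inr_nonneg (this ▸ hu' q m)
      exact absurd ((hxl a₁).symm.trans (hxl a₂)) ha
    · exact ⟨q, rfl⟩
  obtain ⟨mk, hmk⟩ := col_inr k
  have row_inr (l : A) : ∃ p, Φ₁ (inr l) = inl p := by
    rcases hl : Φ₁ (inr l) with p | p
    · exact ⟨p, rfl⟩
    · have := H (inr l) (inr k)
      rw [hl, hmk, hatU_inr_inr] at this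
      exact absurd this (hatU_inr_inl_ne_zero u' p mk i)
  have col_inl (y : A) : ∃ s, Φ₂ (inl y) = inr s := by
    rcases hy : Φ₂ (inl y) with q | q
    · have hly (l : A) : l = y := by
        obtain ⟨p, hp⟩ := row_inr l
        have := H (inr l) (inl y)
        rw [hp, hy, hatU_inl_inl] at this
        exact eq_of_hatU_inr_inl_nonneg (this ▸ hu' p q)
      exact absurd ((hly a₁).trans (hly a₂).symm) ha
    · exact ⟨q, rfl⟩
  obtain ⟨x, y, hxy⟩ := hu
  obtain ⟨r, hr⟩ := row_inl x
  obtain ⟨s, hs⟩ := col_inl y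
  have := H (inl x) (inl y)
  rw [hr, hs, hatU_inr_inr] at this
  exact hxy this.symm

lemma exists_inr_eq_of_hatU_eq [Nonempty B] (hΦ₂ : Surjective Φ₂)
    (h₂ : ∀ l, ∃ l', Φ₂ (inl l) = inl l') (H : ∀ x y, hatU u' (Φ₁ x) (Φ₂ y) i = hatU u x y i)
    (k : A) : ∃ k', Φ₁ (inr k) = inr k' := by
  obtain ⟨z, hz⟩ := hΦ₂ (inr (Classical.arbitrary B))
  obtain ⟨l, rfl⟩ : ∃ l, z = inr l := by
    rcases z with l | l
    · obtain ⟨l', hl'⟩ := h₂ l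
      exact absurd (hl'.symm.trans hz) inl_ne_inr
    · exact ⟨l, rfl⟩
  rcases hk : Φ₁ (inr k) with p | p
  · have := H (inr k) (inr l)
    rw [hk, hz, hatU_inr_inr] at this
    exact absurd this (hatU_inl_inr_ne_zero u' p _ i)
  · exact ⟨p, rfl⟩

lemma StrictIso.of_hatU [Nontrivial A] (hu' : ∀ x y, 0 ≤ u' x y 0) (hu : ∃ x y, u x y 0 ≠ 0)
    (h : StrictIso (hatU u) (hatU u')) : StrictIso u u' := by
  obtain ⟨Φ₁, Φ₂, h₁, h₂, H⟩ := h
  have H₀ (x y) : hatU u' (Φ₁ x) (Φ₂ y) 0 = hatU u x y 0 := congrFun (H x y) 0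
  have H₀_flip (x y) : hatU (flip u') (Φ₂ x) (Φ₁ y) 0 = hatU (flip u) x y 0 := by
    simp only [hatU_flip, H₀]
  have hl₁ := exists_inl_eq_of_hatU_eq hu' hu H₀
  have hl₂ := exists_inl_eq_of_hatU_eq (fun x y => hu' y x)
    (by obtain ⟨x, y, hxy⟩ := hu; exact ⟨y, x, hxy⟩) H₀_flip
  have : Nonempty B := ⟨(hl₁ (Classical.arbitrary A)).choose⟩
  obtain ⟨f₁, g₁, rfl⟩ := exists_eq_sumMap hl₁ (exists_inr_eq_of_hatU_eq h₂.2 hl₂ H₀)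
  obtain ⟨f₂, g₂, rfl⟩ := exists_eq_sumMap hl₂ (exists_inr_eq_of_hatU_eq h₁.2 hl₁ H₀_flip)
  exact ⟨f₁, f₂, (Sum.map_bijective.1 h₁).1, (Sum.map_bijective.1 h₂).1,
    fun x y => H (inl x) (inl y)⟩

end HatGame

theorem hat_construction_general {A B : Type*}
    [DecidableEq A] [DecidableEq B]
    (u : A → A → Fin 2 → ℝ) (u' : B → B → Fin 2 → ℝ)
    (hu01 : ∀ x y i, u x y i ∈ Set.Icc (0 : ℝ) 1)
    (hu'01 : ∀ x y i, u' x y i ∈ Set.Icc (0 : ℝ) 1)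
    (hu0 : ∀ i, ∃ x y, u x y i = 0) (hu1 : ∀ i, ∃ x y, u x y i = 1)
    (hu'0 : ∀ i, ∃ x y, u' x y i = 0) (hu'1 : ∀ i, ∃ x y, u' x y i = 1) :
    NoDominated (hatU u) ∧ NoDominated (hatU u') ∧
      (TwoIso u u' ↔ TwoIso (hatU u) (hatU u')) := by
  have : Nontrivial A := nontrivial_of_exists_payoff_eq zero_ne_one (hu0 0) (hu1 0)
  have : Nontrivial B := nontrivial_of_exists_payoff_eq zero_ne_one (hu'0 0) (hu'1 0)
  have hlo i : IsLeast (payoffs u i) 0 := isLeast_payoffs (fun x y => (hu01 x y i).1) (hu0 i)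
  have hhi i : IsGreatest (payoffs u i) 1 := isGreatest_payoffs (fun x y => (hu01 x y i).2) (hu1 i)
  have hlo' i : IsLeast (payoffs u' i) 0 := isLeast_payoffs (fun x y => (hu'01 x y i).1) (hu'0 i)
  have hhi' i : IsGreatest (payoffs u' i) 1 :=
    isGreatest_payoffs (fun x y => (hu'01 x y i).2) (hu'1 i)
  have hu_ne : ∃ x y, u x y 0 ≠ 0 := by
    obtain ⟨x, y, hxy⟩ := hu1 0
    exact ⟨x, y, by simp [hxy]⟩
  refine ⟨noDominated_hatU fun x y i => (hu01 x y i).2,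
    noDominated_hatU fun x y i => (hu'01 x y i).2, fun h => ?_, fun h => ?_⟩
  · exact (h.strictIso (fun _ => one_pos) hlo hhi hlo' hhi').hat.twoIso
  · refine (StrictIso.of_hatU (fun x y => (hu'01 x y 0).1) hu_ne ?_).twoIso
    exact h.strictIso (fun _ => by norm_num)
      (fun i => isLeast_payoffs_hatU fun x y => (hu01 x y i).1)
      (fun i => isGreatest_payoffs_hatU fun x y => (hu01 x y i).2)
      (fun i => isLeast_payoffs_hatU fun x y => (hu'01 x y i).1)
      (fun i => isGreatest_payoffs_hatU fun x y => (hu'01 x y i).2)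

/-- reduction in Theorem 10 of the paper: for games `G`, `G'` with
utilities in `[0,1]` attaining `0` and `1` for each player, the constructed games `Ĝ`, `Ĝ'`
have no strictly dominated actions, and `G ≅ G'` iff `Ĝ ≅ Ĝ'`. -/
theorem hat_construction {A B : Type*} [Fintype A] [Fintype B] [Nonempty A] [Nonempty B]
    [DecidableEq A] [DecidableEq B]
    (u : A → A → Fin 2 → ℝ) (u' : B → B → Fin 2 → ℝ)
    (hu01 : ∀ x y i, u x y i ∈ Set.Icc (0 : ℝ) 1)
    (hu'01 : ∀ x y i, u' x y i ∈ Set.Icc (0 : ℝ) 1)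
    (hu0 : ∀ i, ∃ x y, u x y i = 0) (hu1 : ∀ i, ∃ x y, u x y i = 1)
    (hu'0 : ∀ i, ∃ x y, u' x y i = 0) (hu'1 : ∀ i, ∃ x y, u' x y i = 1) :
    NoDominated (hatU u) ∧ NoDominated (hatU u') ∧
      (TwoIso u u' ↔ TwoIso (hatU u) (hatU u')) :=
  hat_construction_general u u' hu01 hu'01 hu0 hu1 hu'0 hu'1

end SPIs
end

section
/- Let R ⊆ ℝ² be a nonempty compact convex set and let r^max = (max_{r ∈ R} r_1, max_{r ∈ R} r_2). If v ∈ R is not Pareto optimal in R, i.e., there exists p ∈ R with p ≻ v, then there exists ε ∈ (0, 1] such that (1 − ε)v + ε·r^max ∈ R. -/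
/-!
Let `a, b ∈ R` attain the maxima of the two coordinates and put `d = r^max - v ≥ 0`. The vectors
`a - v = (d₀, ·)` and `b - v = (·, d₁)` reach the two sides of the box `[0, d]`, and the Pareto
improvement `p - v` is a nonzero vector of the positive quadrant. Hence `d` is a nonnegative
combination of `p - v` and one of `a - v`, `b - v`, i.e. `d = c • (z - v)` for some `z ∈ R` and
`c ≥ 0` by convexity, and then `v + ε • d ∈ R` for `ε = 1 / (1 + c)`.
-/

namespace SPIs

theorem _root_.StarConvex.exists_combo_mem_of_sub_eq_smul {E : Type*} [AddCommGroup E]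
    [Module ℝ E] {R : Set E} {v x w : E} {c : ℝ} (hR : StarConvex ℝ v R) (hx : x ∈ R) (hc : 0 ≤ c)
    (hw : w - v = c • (x - v)) :
    ∃ ε : ℝ, 0 < ε ∧ ε ≤ 1 ∧ (1 - ε) • v + ε • w ∈ R := by
  have hc₁ : 0 < 1 + c := by linarith
  refine ⟨1 / (1 + c), by positivity, by rw [div_le_one hc₁]; linarith, ?_⟩
  have hcombo : (1 - 1 / (1 + c)) • v + (1 / (1 + c)) • w = v + (c / (1 + c)) • (x - v) := by
    rw [show w = v + c • (x - v) by rw [← hw]; abel, smul_add, smul_smul]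
    match_scalars <;> field_simp; ring
  rw [hcombo]
  exact hR.add_smul_sub_mem hx (by positivity) (by rw [div_le_one hc₁]; linarith)

theorem _root_.Convex.exists_add_smul_sub_eq_smul_sub {E : Type*} [AddCommGroup E]
    [Module ℝ E] {R : Set E} {v x y : E} {α β : ℝ} (hR : Convex ℝ R) (hv : v ∈ R) (hx : x ∈ R)
    (hy : y ∈ R) (hα : 0 ≤ α) (hβ : 0 ≤ β) :
    ∃ c : ℝ, 0 ≤ c ∧ ∃ z ∈ R, α • (x - v) + β • (y - v) = c • (z - v) := by
  rcases (add_nonneg hα hβ).eq_or_lt with hαβ | hαβ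
  · refine ⟨0, le_rfl, v, hv, ?_⟩
    rw [show α = 0 by linarith, show β = 0 by linarith]
    simp
  · refine ⟨α + β, hαβ.le, (α / (α + β)) • x + (β / (α + β)) • y,
      hR hx hy (by positivity) (by positivity) (by field_simp), ?_⟩
    match_scalars <;> field_simp
    ring

theorem exists_nonneg_comb_of_cross_le {p₀ p₁ b₀ d₀ d₁ : ℝ} (hp₁ : 0 ≤ p₁)
    (hp : 0 < p₀ ∨ 0 < p₁) (hd₀ : 0 ≤ d₀) (hd₁ : 0 ≤ d₁) (hb₀ : b₀ ≤ d₀)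
    (hpd : p₁ * d₀ ≤ p₀ * d₁) :
    ∃ α β : ℝ, 0 ≤ α ∧ 0 ≤ β ∧ d₀ = α * p₀ + β * b₀ ∧ d₁ = α * p₁ + β * d₁ := by
  set D := p₀ * d₁ - p₁ * b₀
  have hD : D = (p₀ * d₁ - p₁ * d₀) + p₁ * (d₀ - b₀) := by ring
  rcases (show 0 ≤ D by nlinarith).lt_or_eq with hDpos | hDzero
  · -- Cramer's rule
    refine ⟨d₁ * (d₀ - b₀) / D, (p₀ * d₁ - p₁ * d₀) / D, by
      have := mul_nonneg hd₁ (sub_nonneg.2 hb₀); positivity, div_nonneg (by linarith) hDpos.le,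
      ?_, ?_⟩ <;> field_simp <;> ring
  · have hcross : p₀ * d₁ = p₁ * d₀ := by nlinarith [mul_nonneg hp₁ (sub_nonneg.2 hb₀)]
    have : p₁ * (d₀ - b₀) = 0 := by linarith
    rcases mul_eq_zero.1 this with hp₁0 | hbd
    · have hp₀pos : 0 < p₀ := hp.resolve_right hp₁0.not_gt
      have hd₁0 : d₁ = 0 := by
        rw [hp₁0, zero_mul] at hcross; exact (mul_eq_zero.1 hcross).resolve_left hp₀pos.ne'
      refine ⟨d₀ / p₀, 0, by positivity, le_rfl, ?_, ?_⟩
      · rw [div_mul_cancel₀ _ hp₀pos.ne']; ring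
      · simp [hp₁0, hd₁0]
    · exact ⟨0, 1, le_rfl, zero_le_one, by linarith, by ring⟩

theorem move_towards_rmax_general (R : Set (Fin 2 → ℝ))
    (hconv : Convex ℝ R)
    (rmax : Fin 2 → ℝ)
    (hrmax : ∀ i, IsGreatest ((fun r => r i) '' R) (rmax i))
    (v : Fin 2 → ℝ) (hv : v ∈ R)
    (p : Fin 2 → ℝ) (hp : p ∈ R) (hpv : StrictPareto v p) :
    ∃ ε : ℝ, 0 < ε ∧ ε ≤ 1 ∧ (1 - ε) • v + ε • rmax ∈ R := by
  have hle : ∀ z ∈ R, ∀ i, z i ≤ rmax i := fun z hz i => (hrmax i).2 ⟨z, hz, rfl⟩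
  obtain ⟨a, ha, ha₀ : a 0 = rmax 0⟩ := (hrmax 0).1
  obtain ⟨b, hb, hb₁ : b 1 = rmax 1⟩ := (hrmax 1).1
  have hpv₀ := sub_nonneg.2 (hpv.1 0)
  have hpv₁ := sub_nonneg.2 (hpv.1 1)
  have hpv' : 0 < p 0 - v 0 ∨ 0 < p 1 - v 1 := by
    simpa only [Fin.exists_fin_two, sub_pos] using hpv.2
  suffices ∃ x ∈ R, ∃ α β : ℝ, 0 ≤ α ∧ 0 ≤ β ∧ rmax - v = α • (p - v) + β • (x - v) by
    obtain ⟨x, hx, α, β, hα, hβ, hcomb⟩ := this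
    obtain ⟨c, hc, z, hz, hcz⟩ := hconv.exists_add_smul_sub_eq_smul_sub hv hp hx hα hβ
    exact (hconv.starConvex hv).exists_combo_mem_of_sub_eq_smul hz hc (hcomb.trans hcz)
  -- The sign of the cross product of `p - v` and `rmax - v` tells on which side of `p - v` the
  -- direction `rmax - v` lies; on that side sits `b - v` (resp. `a - v`).
  rcases le_total ((p 1 - v 1) * (rmax 0 - v 0)) ((p 0 - v 0) * (rmax 1 - v 1)) with hpd | hpd
  · obtain ⟨α, β, hα, hβ, h₀, h₁⟩ := exists_nonneg_comb_of_cross_le hpv₁ hpv'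
      (sub_nonneg.2 (hle v hv 0)) (sub_nonneg.2 (hle v hv 1)) (sub_le_sub_right (hle b hb 0) _) hpd
    refine ⟨b, hb, α, β, hα, hβ, ?_⟩
    ext i; fin_cases i <;> simp [hb₁] <;> linarith
  · obtain ⟨α, β, hα, hβ, h₁, h₀⟩ := exists_nonneg_comb_of_cross_le hpv₀ hpv'.symm
      (sub_nonneg.2 (hle v hv 1)) (sub_nonneg.2 (hle v hv 0)) (sub_le_sub_right (hle a ha 1) _) hpd
    refine ⟨a, ha, α, β, hα, hβ, ?_⟩
    ext i; fin_cases i <;> simp [ha₀] <;> linarith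

/-- in a nonempty compact convex `R ⊆ ℝ²`, any point `v ∈ R` that is not
Pareto optimal in `R` can be moved a positive fraction of the way towards
`r^max = (max_{r ∈ R} r_1, max_{r ∈ R} r_2)` while staying in `R`. -/
theorem move_towards_rmax (R : Set (Fin 2 → ℝ)) (hne : R.Nonempty)
    (hcomp : IsCompact R) (hconv : Convex ℝ R)
    (rmax : Fin 2 → ℝ)
    (hrmax : ∀ i, IsGreatest ((fun r => r i) '' R) (rmax i))
    (v : Fin 2 → ℝ) (hv : v ∈ R)
    (p : Fin 2 → ℝ) (hp : p ∈ R) (hpv : StrictPareto v p) :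
    ∃ ε : ℝ, 0 < ε ∧ ε ≤ 1 ∧ (1 - ε) • v + ε • rmax ∈ R :=
  move_towards_rmax_general R hconv rmax hrmax v hv p hp hpv

end SPIs
end

section
/- Let R ⊆ ℝ² be a convex set and v ∈ ℝ². Suppose there exists p ∈ R with p ≻ v (i.e., p_1 ≥ v_1, p_2 ≥ v_2, with strict inequality in at least one coordinate), and there exists w ∈ R with w_1 > v_1 and w_2 ≤ v_2. Then there exists ε > 0 such that (v_1 + ε, v_2) ∈ R. -/
namespace SPIs

/-- if `R ⊆ ℝ²` is convex and contains a strict Pareto improvement `p` on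
`v` as well as a point `w` with `w_1 > v_1` and `w_2 ≤ v_2`, then `(v_1 + ε, v_2) ∈ R` for
some `ε > 0`. -/
theorem move_right_in_convex (R : Set (Fin 2 → ℝ)) (hconv : Convex ℝ R)
    (v p w : Fin 2 → ℝ)
    (hp : p ∈ R) (hpv : StrictPareto v p)
    (hw : w ∈ R) (hw1 : v 0 < w 0) (hw2 : w 1 ≤ v 1) :
    ∃ ε : ℝ, 0 < ε ∧ Function.update v 0 (v 0 + ε) ∈ R := by
  obtain ⟨hpar, i, hi⟩ := hpv
  have hp0 : v 0 ≤ p 0 := hpar 0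
  have hp1 : v 1 ≤ p 1 := hpar 1
  by_cases hcase : v 1 < p 1
  · -- convex combination of p and w with second coordinate v 1
    set t : ℝ := (v 1 - w 1) / (p 1 - w 1) with ht
    have hden : 0 < p 1 - w 1 := by linarith
    have ht0 : 0 ≤ t := div_nonneg (by linarith) hden.le
    have ht1 : t < 1 := by
      rw [div_lt_one hden]; linarith
    have hmem : t • p + (1 - t) • w ∈ R :=
      hconv hp hw ht0 (by linarith) (by ring)
    refine ⟨t * (p 0 - v 0) + (1 - t) * (w 0 - v 0), ?_, ?_⟩
    · have h1 : 0 ≤ t * (p 0 - v 0) := mul_nonneg ht0 (by linarith)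
      have h2 : 0 < (1 - t) * (w 0 - v 0) := mul_pos (by linarith) (by linarith)
      linarith
    · convert hmem using 1
      funext j
      fin_cases j
      · simp [Function.update]; ring
      · have key : t * p 1 + (1 - t) * w 1 = v 1 := by
          rw [ht]; field_simp; ring
        simp only [Function.update, Fin.isValue, Pi.add_apply, Pi.smul_apply, smul_eq_mul]
        norm_num
        linarith
  · -- p 1 = v 1, so p 0 > v 0 and p itself works
    have hp1' : p 1 = v 1 := le_antisymm (not_lt.mp hcase) hp1
    have hp0' : v 0 < p 0 := by
      fin_cases i
      · exact hi
      · simp at hi; linarith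
    refine ⟨p 0 - v 0, by linarith, ?_⟩
    convert hp using 1
    funext j
    fin_cases j
    · simp [Function.update]
    · simp [Function.update, hp1']

end SPIs
end
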